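/- arXiv:0912.2981 — 13 statements merged into one kernel-verified Lean document; each statement's English description precedes it below -/
import Mathlib

section
/- There is no point in the plane of a regular pentagon with unit side length that is at rational distance from all five vertices of the pentagon. Concretely: for any c, w ∈ ℂ with |w·(exp(2πi/5) − 1)| = 1, setting z_k = c + w·exp(2πik/5) for k = 0,…,4 (the vertices of a unit regular pentagon), there is no p ∈ ℂ such that the distance |p − z_k| is rational for every k. -/
/-!
Put `u = p - c` and `a = u * conj w`. The squared distances `|u - w ζᵏ|² = |u|² + |w|² - 2 Re(a ζ⁻ᵏ)`
are rational. Since the fifth roots of unity sum to zero, `|u|² + |w|²` is rational, hence so is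
`Re a`. The vertices `k` and `5 - k` then give `Re a * √5` and `Im a * sin (4π/5) * √5` rational,
using `cos (2π/5) = (√5 - 1)/4` and `sin (2π/5) = (1 + √5)/2 * sin (4π/5)`; so `a = 0` and `p` is
the centre. Its distance `|w|` to the vertices is then rational, while `|w|² (5 - √5)/2 = 1`.
-/

open Real ComplexConjugate

namespace Real

theorem cos_two_pi_div_five : cos (2 * π / 5) = (√5 - 1) / 4 := by
  rw [show 2 * π / 5 = 2 * (π / 5) by ring, cos_two_mul, cos_pi_div_five]
  linear_combination sq_sqrt (show (0 : ℝ) ≤ 5 by norm_num) / 8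

theorem cos_four_pi_div_five : cos (4 * π / 5) = -(1 + √5) / 4 := by
  rw [show 4 * π / 5 = π - π / 5 by ring, cos_pi_sub, cos_pi_div_five]
  ring

theorem sin_two_pi_div_five : sin (2 * π / 5) = (1 + √5) / 2 * sin (4 * π / 5) := by
  rw [show 4 * π / 5 = π - π / 5 by ring, sin_pi_sub, show 2 * π / 5 = 2 * (π / 5) by ring,
    sin_two_mul, cos_pi_div_five]
  ring

end Real

theorem Irrational.ratCast_eq_zero_of_mul_eq_ratCast {x : ℝ} (hx : Irrational x) {a b : ℚ}
    (h : a * x = b) : a = 0 := by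
  by_contra ha
  exact (hx.ratCast_mul ha).ne_rat b h

theorem eq_zero_of_pentagon_values_rat {A B S : ℝ} (d : Fin 5 → ℚ)
    (hd : ∀ k : Fin 5,
      (d k : ℝ) = S - 2 * (A * cos (2 * π * (k : ℕ) / 5) + B * sin (2 * π * (k : ℕ) / 5))) :
    A = 0 ∧ B = 0 := by
  have h5 : Irrational √5 := Nat.prime_five.irrational_sqrt
  have E0 := hd 0
  have E1 := hd 1
  have E2 := hd 2
  have E3 := hd 3
  have E4 := hd 4
  norm_num at E0 E1 E2 E3 E4
  rw [show 2 * π * 2 / 5 = 4 * π / 5 by ring] at E2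
  rw [show 2 * π * 3 / 5 = 2 * π - 4 * π / 5 by ring, cos_two_pi_sub, sin_two_pi_sub] at E3
  rw [show 2 * π * 4 / 5 = 2 * π - 2 * π / 5 by ring, cos_two_pi_sub, sin_two_pi_sub] at E4
  rw [cos_two_pi_div_five, sin_two_pi_div_five] at E1 E4
  rw [cos_four_pi_div_five] at E2 E3
  obtain ⟨σ, rfl⟩ : ∃ σ : ℚ, S = σ := ⟨(d 0 + d 1 + d 2 + d 3 + d 4) / 5, by
    push_cast
    linear_combination -(E0 + E1 + E2 + E3 + E4) / 5⟩
  obtain ⟨a, rfl⟩ : ∃ a : ℚ, A = a := ⟨(σ - d 0) / 2, by push_cast; linear_combination E0 / 2⟩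
  have ha : a = 0 := h5.ratCast_eq_zero_of_mul_eq_ratCast (b := 2 * σ + a - d 1 - d 4)
    (by push_cast; linear_combination E1 + E4)
  obtain ⟨b, hb⟩ : ∃ b : ℚ, B * sin (4 * π / 5) = b :=
    ⟨(d 3 - d 2) / 4, by push_cast; linear_combination (E2 - E3) / 4⟩
  have hb0 : b = 0 := h5.ratCast_eq_zero_of_mul_eq_ratCast (b := (d 4 - d 1) / 2 - b)
    (by push_cast; linear_combination (E1 - E4) / 2 - (1 + √5) * hb)
  have hsin : sin (4 * π / 5) ≠ 0 :=
    (sin_pos_of_pos_of_lt_pi (by positivity) (by linarith [pi_pos])).ne'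
  refine ⟨by exact_mod_cast ha, ?_⟩
  simpa [hb0, hsin] using hb

namespace Complex

theorem normSq_sub_mul_exp_mul_I (u w : ℂ) (t : ℝ) :
    normSq (u - w * exp (t * I)) =
      normSq u + normSq w - 2 * ((u * conj w).re * Real.cos t + (u * conj w).im * Real.sin t) := by
  rw [normSq_sub, normSq_mul, exp_mul_I]
  simp only [← ofReal_cos, ← ofReal_sin, normSq_apply, map_mul, map_add, conj_ofReal, conj_I,
    mul_re, mul_im, add_re, add_im, ofReal_re, ofReal_im, I_re, I_im, conj_re, conj_im, neg_re,
    neg_im]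
  linear_combination (w.re * w.re + w.im * w.im) * Real.sin_sq_add_cos_sq t

theorem normSq_exp_two_pi_div_five_sub_one :
    normSq (exp (2 * π * I / 5) - 1) = (5 - √5) / 2 := by
  rw [show 2 * π * I / 5 = (2 * π / 5 : ℝ) * I by push_cast; ring, exp_mul_I, ← ofReal_cos,
    ← ofReal_sin]
  simp only [normSq_apply, sub_re, sub_im, add_re, add_im, mul_re, mul_im, I_re, I_im,
    ofReal_re, ofReal_im, one_re, one_im]
  linear_combination Real.sin_sq_add_cos_sq (2 * π / 5) - 2 * Real.cos_two_pi_div_five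

end Complex

/-- There is no point in the plane of a unit regular pentagon at rational
distance from all five vertices. -/
theorem no_rational_distance_point_pentagon (c w : ℂ)
    (hw : ‖w * (Complex.exp (2 * Real.pi * Complex.I / 5) - 1)‖ = 1) :
    ¬ ∃ p : ℂ, ∀ k : Fin 5, ∃ q : ℚ,
      ‖p - (c + w * Complex.exp (2 * Real.pi * Complex.I * ((k : ℕ) : ℂ) / 5))‖ = q := by
  rintro ⟨p, hp⟩
  choose d hd using hp
  have hdist (k : Fin 5) : ((d k ^ 2 : ℚ) : ℝ) =
      Complex.normSq (p - c - w * Complex.exp ((2 * π * (k : ℕ) / 5 : ℝ) * Complex.I)) := by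
    rw [Rat.cast_pow, ← hd k, ← Complex.sq_norm, sub_sub]
    congr 6
    push_cast
    ring
  simp only [Complex.normSq_sub_mul_exp_mul_I] at hdist
  obtain ⟨hre, him⟩ := eq_zero_of_pentagon_values_rat _ hdist
  have hw0 : w ≠ 0 := by rintro rfl; simp at hw
  have hpc : p - c = 0 := by
    simpa [hw0] using Complex.ext (z := (p - c) * conj w) (w := 0) hre him
  have hside : Complex.normSq w = ((5 - √5) / 2)⁻¹ := by
    refine eq_inv_of_mul_eq_one_left ?_
    rw [← Complex.normSq_exp_two_pi_div_five_sub_one, ← Complex.normSq_mul, ← Complex.sq_norm,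
      hw, one_pow]
  have hirr : Irrational ((5 - √5) / 2)⁻¹ :=
    ((Nat.prime_five.irrational_sqrt.ratCast_sub (q := 5)).div_ratCast (q := 2) two_ne_zero).inv
  refine hirr.ne_rat (d 0 ^ 2) ?_
  simpa [hpc, hside] using (hdist 0).symm
end

section
/- Let n ≥ 7 be an integer with n ∉ {8, 12, 24}. There is no point in the plane of a regular n-gon with unit side length that is at rational distance from all n vertices. Concretely: for any c, w ∈ ℂ with |w·(exp(2πi/n) − 1)| = 1, setting z_k = c + w·exp(2πik/n) for k = 0,…,n−1, there is no p ∈ ℂ such that |p − z_k| ∈ ℚ for every k. -/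
/-!
Write the vertices as `c + w ζ ^ k` with `ζ = exp (2πi/n)`, and let `g k = ⟪p - c, w ζ ^ k⟫`.
The squared distances from `p` to the vertices are `‖p - c‖² + ‖w‖² - 2 g k`, so rational
distances make the differences `g (k + 1) - g k` rational, while `ζ + ζ⁻¹ = 2 cos (2π/n)` gives
the recurrence `g (k + 2) + g k = 2 cos (2π/n) g (k + 1)`. As `cos (2π/n)` is irrational for
`n ≥ 7` (Niven), five consecutive vertices already force `g 0 = g 1 = 0`, i.e. `p = c`. Then the
circumradius `‖w‖` is a rational distance, and `‖w‖² (2 - 2 cos (2π/n)) = 1` makes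
`cos (2π/n)` rational after all.
-/

open Complex ComplexConjugate
open scoped Real InnerProductSpace

theorem irrational_cos_two_pi_div {n : ℕ} (hn : 7 ≤ n) : Irrational (Real.cos (2 * π / n)) := by
  intro ⟨q, hq⟩
  have hn' : (7 : ℝ) ≤ n := by exact_mod_cast hn
  have hlt : Real.cos (2 * π / n) < 1 := by
    rw [← Real.cos_zero]
    refine Real.cos_lt_cos_of_nonneg_of_le_pi le_rfl ?_ (by positivity)
    rw [div_le_iff₀ (by positivity)]
    nlinarith [Real.pi_pos]
  have hgt : 1 / 2 < Real.cos (2 * π / n) := by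
    rw [← Real.cos_pi_div_three]
    refine Real.cos_lt_cos_of_nonneg_of_le_pi (by positivity) (by linarith [Real.pi_pos]) ?_
    rw [div_lt_div_iff₀ (by positivity) (by norm_num)]
    nlinarith [Real.pi_pos]
  have hniven := niven ⟨2 / n, by push_cast; ring⟩ ⟨q, hq.symm⟩
  simp only [Set.mem_insert_iff, Set.mem_singleton_iff] at hniven
  rcases hniven with h | h | h | h | h <;> linarith

theorem re_exp_two_pi_I_div (n : ℕ) : (exp (2 * π * I / n)).re = Real.cos (2 * π / n) := by
  have : 2 * π * I / n = ((2 * π / n : ℝ) : ℂ) * I := by push_cast; ring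
  rw [this, exp_ofReal_mul_I_re]

theorem Irrational.eq_zero_of_add_eq_two_mul_mul {γ : ℝ} (hγ : Irrational γ) {a b c : ℚ}
    (h : (a + c : ℝ) = 2 * γ * b) : b = 0 := by
  by_contra hb
  refine hγ ⟨(a + c) / (2 * b), ?_⟩
  push_cast
  rw [h]
  field_simp

/-- Differencing the recurrence gives the same recurrence for the rational differences
`g (k + 1) - g k`, which the irrationality of `γ` forces to vanish. -/
theorem eq_zero_of_recurrence_of_rat_sub {γ : ℝ} (hγ : Irrational γ) {g : ℕ → ℝ}
    (hrec : ∀ k, g (k + 2) + g k = 2 * γ * g (k + 1))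
    (hdiff : ∀ k < 4, ∃ r : ℚ, g (k + 1) - g k = r) : g 0 = 0 ∧ g 1 = 0 := by
  have hrec₀ : g 2 + g 0 = 2 * γ * g 1 := hrec 0
  have hrec₁ : g 3 + g 1 = 2 * γ * g 2 := hrec 1
  have hrec₂ : g 4 + g 2 = 2 * γ * g 3 := hrec 2
  obtain ⟨r₀, h₀⟩ : ∃ r : ℚ, g 1 - g 0 = r := hdiff 0 (by norm_num)
  obtain ⟨r₁, h₁⟩ : ∃ r : ℚ, g 2 - g 1 = r := hdiff 1 (by norm_num)
  obtain ⟨r₂, h₂⟩ : ∃ r : ℚ, g 3 - g 2 = r := hdiff 2 (by norm_num)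
  obtain ⟨r₃, h₃⟩ : ∃ r : ℚ, g 4 - g 3 = r := hdiff 3 (by norm_num)
  have hr₁ : r₁ = 0 := hγ.eq_zero_of_add_eq_two_mul_mul (a := r₂) (c := r₀) (by
    rw [← h₀, ← h₁, ← h₂]; linear_combination hrec₁ - hrec₀)
  have hr₂ : r₂ = 0 := hγ.eq_zero_of_add_eq_two_mul_mul (a := r₃) (c := r₁) (by
    rw [← h₁, ← h₂, ← h₃]; linear_combination hrec₂ - hrec₁)
  simp only [hr₁, hr₂, Rat.cast_zero, sub_eq_zero] at h₁ h₂
  have hγ₁ : 2 - 2 * γ ≠ 0 := fun h ↦ hγ.ne_one (by linarith)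
  have hg₁ : g 1 = 0 := (mul_eq_zero.mp (by linear_combination hrec₁ - h₂ - (1 - 2 * γ) * h₁ :
    (2 - 2 * γ) * g 1 = 0)).resolve_left hγ₁
  exact ⟨by linear_combination hrec₀ - h₁ + (2 * γ - 1) * hg₁, hg₁⟩

theorem pow_add_two_add_pow_of_norm_eq_one {ζ : ℂ} (hζ : ‖ζ‖ = 1) (k : ℕ) :
    ζ ^ (k + 2) + ζ ^ k = (2 * ζ.re) • ζ ^ (k + 1) := by
  have hconj : ζ * conj ζ = 1 := by rw [mul_conj, normSq_eq_norm_sq, hζ]; norm_num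
  rw [real_smul, ← add_conj]
  linear_combination (-ζ ^ k) * hconj

theorem inner_mul_pow_add_two_add_inner {ζ : ℂ} (hζ : ‖ζ‖ = 1) (x w : ℂ) (k : ℕ) :
    ⟪x, w * ζ ^ (k + 2)⟫_ℝ + ⟪x, w * ζ ^ k⟫_ℝ = 2 * ζ.re * ⟪x, w * ζ ^ (k + 1)⟫_ℝ := by
  rw [← inner_add_right, ← mul_add, pow_add_two_add_pow_of_norm_eq_one hζ, mul_smul_comm,
    real_inner_smul_right]

theorem norm_sub_one_sq_of_norm_eq_one {ζ : ℂ} (hζ : ‖ζ‖ = 1) :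
    ‖ζ - 1‖ ^ 2 = 2 - 2 * ζ.re := by
  rw [norm_sub_sq_real, hζ, Complex.inner]
  simp only [one_pow, one_mul, conj_re, norm_one]
  ring

theorem im_ne_zero_of_irrational_re {ζ : ℂ} (hζ : ‖ζ‖ = 1) (hre : Irrational ζ.re) :
    ζ.im ≠ 0 := by
  intro him
  have : |ζ.re| = 1 := by rw [← hζ, ← re_add_im ζ, him]; simp
  rcases abs_eq zero_le_one |>.mp this with h | h
  · exact hre ⟨1, by simp [h]⟩
  · exact hre ⟨-1, by simp [h]⟩

theorem eq_zero_of_inner_eq_zero_of_inner_mul_eq_zero {ζ x w : ℂ} (hζ : ζ.im ≠ 0) (hw : w ≠ 0)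
    (h₀ : ⟪x, w⟫_ℝ = 0) (h₁ : ⟪x, w * ζ⟫_ℝ = 0) : x = 0 := by
  rw [Complex.inner] at h₀ h₁
  set v := w * conj x
  have h₁ : v.im * ζ.im = 0 := by
    rw [show w * ζ * conj x = v * ζ by ring, mul_re, h₀] at h₁
    linarith
  have hv : v = 0 := Complex.ext h₀ ((mul_eq_zero.mp h₁).resolve_right hζ)
  simpa [v, hw] using hv

theorem not_forall_rat_dist_of_irrational_re {ζ w : ℂ} (hζ : ‖ζ‖ = 1) (hre : Irrational ζ.re)
    (hw : w ≠ 0) {s : ℚ} (hside : ‖w * (ζ - 1)‖ = s) (p c : ℂ) :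
    ¬ ∀ k < 5, ∃ q : ℚ, ‖p - (c + w * ζ ^ k)‖ = q := by
  intro hq
  set g : ℕ → ℝ := fun k ↦ ⟪p - c, w * ζ ^ k⟫_ℝ
  have hdist : ∀ k, ‖p - (c + w * ζ ^ k)‖ ^ 2 = ‖p - c‖ ^ 2 - 2 * g k + ‖w‖ ^ 2 := by
    intro k
    rw [show p - (c + w * ζ ^ k) = (p - c) - w * ζ ^ k by ring, norm_sub_sq_real]
    simp [g, hζ]
  have hdiff : ∀ k < 4, ∃ r : ℚ, g (k + 1) - g k = r := by
    intro k hk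
    obtain ⟨a, ha⟩ := hq k (by omega)
    obtain ⟨b, hb⟩ := hq (k + 1) (by omega)
    refine ⟨(a ^ 2 - b ^ 2) / 2, ?_⟩
    have hk := hdist k
    have hk₁ := hdist (k + 1)
    rw [ha] at hk
    rw [hb] at hk₁
    push_cast
    linarith
  obtain ⟨h₀, h₁⟩ :=
    eq_zero_of_recurrence_of_rat_sub hre (inner_mul_pow_add_two_add_inner hζ (p - c) w) hdiff
  have hpc : p - c = 0 := eq_zero_of_inner_eq_zero_of_inner_mul_eq_zero
    (im_ne_zero_of_irrational_re hζ hre) hw (by simpa [g] using h₀) (by simpa [g] using h₁)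
  obtain ⟨q, hq₀⟩ := hq 0 (by norm_num)
  have hwq : ‖w‖ ^ 2 = q ^ 2 := by
    have h := hdist 0
    rw [hq₀, hpc, h₀] at h
    simpa using h.symm
  have hq_ne : (q : ℝ) ≠ 0 := fun h ↦ hw (by simpa [h] using hwq)
  have hside_sq : (q : ℝ) ^ 2 * (2 - 2 * ζ.re) = s ^ 2 := by
    rw [← hwq, ← norm_sub_one_sq_of_norm_eq_one hζ, ← mul_pow, ← norm_mul, hside]
  refine hre ⟨1 - s ^ 2 / (2 * q ^ 2), ?_⟩
  push_cast
  rw [← hside_sq]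
  field_simp
  ring

theorem no_rational_distance_point_ngon_general (n : ℕ) (hn : 7 ≤ n) (c w : ℂ)
    (hw : ‖w * (Complex.exp (2 * Real.pi * Complex.I / (n : ℂ)) - 1)‖ = 1) :
    ¬ ∃ p : ℂ, ∀ k : Fin n, ∃ q : ℚ,
      ‖p - (c + w * Complex.exp (2 * Real.pi * Complex.I * ((k : ℕ) : ℂ) / (n : ℂ)))‖ = q := by
  rintro ⟨p, hp⟩
  set ζ := exp (2 * π * I / n)
  have hζ : ‖ζ‖ = 1 := (isPrimitiveRoot_exp n (by omega)).norm'_eq_one (by omega)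
  have hre : Irrational ζ.re := by rw [re_exp_two_pi_I_div]; exact irrational_cos_two_pi_div hn
  have hw₀ : w ≠ 0 := by rintro rfl; simp at hw
  have hvertex : ∀ k : ℕ, exp (2 * π * I * k / n) = ζ ^ k := fun k ↦ by
    rw [← exp_nat_mul]; ring_nf
  refine not_forall_rat_dist_of_irrational_re hζ hre hw₀ (s := 1) (by simpa using hw) p c
    fun k hk ↦ ?_
  simpa [hvertex] using hp ⟨k, by omega⟩

/-- For every integer `n ≥ 7` with `n ∉ {8, 12, 24}`, there is no point in the
plane of a unit regular `n`-gon at rational distance from all `n` vertices. -/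
theorem no_rational_distance_point_ngon (n : ℕ) (hn : 7 ≤ n)
    (h8 : n ≠ 8) (h12 : n ≠ 12) (h24 : n ≠ 24) (c w : ℂ)
    (hw : ‖w * (Complex.exp (2 * Real.pi * Complex.I / (n : ℂ)) - 1)‖ = 1) :
    ¬ ∃ p : ℂ, ∀ k : Fin n, ∃ q : ℚ,
      ‖p - (c + w * Complex.exp (2 * Real.pi * Complex.I * ((k : ℕ) : ℂ) / (n : ℂ)))‖ = q :=
  no_rational_distance_point_ngon_general n hn c w hw
end

section
/- Let d, m, n be positive integers with d > 1 and n = d·m. Then cot(π/d) belongs to the subfield ℚ(cot(π/n)) of ℝ generated over ℚ by cot(π/n); consequently ℚ(cot(π/d)) is a subfield of ℚ(cot(π/n)). -/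
/-!
By the addition formula, `cot (a + b)` is a rational function of `cot a` and `cot b`, so every
field containing `cot x` contains `cot (k * x)` for all `k : ℕ`. Take `x = π / n` and `k = m`.
-/

open Real

namespace Real

theorem cot_add_of_sin_eq_zero_right {a b : ℝ} (hb : sin b = 0) : cot (a + b) = cot a := by
  have hcos : cos b ≠ 0 := by
    intro h
    simpa [hb, h] using sin_sq_add_cos_sq b
  rw [cot_eq_cos_div_sin, cot_eq_cos_div_sin, cos_add, sin_add, hb]
  simp only [mul_zero, sub_zero, add_zero]
  exact mul_div_mul_right _ _ hcos

/-- Where `sin (a + b) = 0` both sides are `0`: the junk value of `cot` on the left, a division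
by `cot a + cot b = 0` on the right. -/
theorem cot_add {a b : ℝ} (ha : sin a ≠ 0) (hb : sin b ≠ 0) :
    cot (a + b) = (cot a * cot b - 1) / (cot a + cot b) := by
  have hab : sin a * sin b ≠ 0 := mul_ne_zero ha hb
  have hnum : cot a * cot b - 1 = cos (a + b) / (sin a * sin b) := by
    rw [cot_eq_cos_div_sin, cot_eq_cos_div_sin, cos_add]
    field_simp
  have hden : cot a + cot b = sin (a + b) / (sin a * sin b) := by
    rw [cot_eq_cos_div_sin, cot_eq_cos_div_sin, sin_add]
    field_simp
    ring
  rw [hnum, hden, div_div_div_cancel_right₀ hab, cot_eq_cos_div_sin]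

theorem cot_nat_mul_mem {S : Type*} [SetLike S ℝ] [SubfieldClass S ℝ] {K : S} {x : ℝ}
    (hx : cot x ∈ K) (k : ℕ) : cot (k * x) ∈ K := by
  induction k with
  | zero => simp [cot_eq_cos_div_sin]
  | succ k ih =>
    rw [Nat.cast_succ, add_one_mul]
    by_cases hkx : sin (k * x) = 0
    · rwa [add_comm, cot_add_of_sin_eq_zero_right hkx]
    by_cases hsx : sin x = 0
    · rwa [cot_add_of_sin_eq_zero_right hsx]
    rw [cot_add hkx hsx]
    exact div_mem (sub_mem (mul_mem ih hx) (one_mem K)) (add_mem ih hx)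

end Real

theorem cot_pi_div_mem_adjoin_general (d m n : ℕ) (hm : 0 < m) (hdm : n = d * m) :
    Real.cot (Real.pi / (d : ℝ)) ∈
        IntermediateField.adjoin ℚ {Real.cot (Real.pi / (n : ℝ))} ∧
      IntermediateField.adjoin ℚ {Real.cot (Real.pi / (d : ℝ))} ≤
        IntermediateField.adjoin ℚ {Real.cot (Real.pi / (n : ℝ))} := by
  have hpi : π / d = m * (π / n) := by
    have hm' : (m : ℝ) ≠ 0 := by exact_mod_cast hm.ne'
    rw [hdm, Nat.cast_mul, mul_div_assoc', mul_comm (m : ℝ) π, mul_div_mul_right _ _ hm']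
  have hmem : cot (π / d) ∈ IntermediateField.adjoin ℚ {cot (π / n)} := by
    rw [hpi]
    exact cot_nat_mul_mem (IntermediateField.mem_adjoin_simple_self ℚ _) m
  exact ⟨hmem, IntermediateField.adjoin_simple_le_iff.mpr hmem⟩

/-- If `d > 1` and `n = d * m`, then `cot (π / d)` lies in `ℚ(cot (π / n))`;
consequently `ℚ(cot (π / d))` is a subfield of `ℚ(cot (π / n))`. -/
theorem cot_pi_div_mem_adjoin (d m n : ℕ) (hd : 0 < d) (hm : 0 < m) (hn : 0 < n)
    (hd1 : 1 < d) (hdm : n = d * m) :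
    Real.cot (Real.pi / (d : ℝ)) ∈
        IntermediateField.adjoin ℚ {Real.cot (Real.pi / (n : ℝ))} ∧
      IntermediateField.adjoin ℚ {Real.cot (Real.pi / (d : ℝ))} ≤
        IntermediateField.adjoin ℚ {Real.cot (Real.pi / (n : ℝ))} :=
  cot_pi_div_mem_adjoin_general d m n hm hdm
end

section
/- Let d, m, n be positive integers with d > 1 and n = d·m. Then cos(2π/d) belongs to the subfield ℚ(cot(π/n)) of ℝ generated over ℚ by cot(π/n); consequently ℚ(cos(2π/d)) is a subfield of ℚ(cot(π/n)). -/
/-!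
Since `cos (2x) = (cot² x - 1) / (cot² x + 1)`, the number `cos (2π / n)` lies in `ℚ(cot (π / n))`.
For `n = d m` we have `cos (2π / d) = cos (m · 2π / n)`, a polynomial with integer coefficients
(a Chebyshev polynomial) in `cos (2π / n)`.
-/

open Real

namespace Real

theorem cos_two_mul_eq_cot_sq (x : ℝ) (hx : sin x ≠ 0) :
    cos (2 * x) = (cot x ^ 2 - 1) / (cot x ^ 2 + 1) := by
  have hsq : sin x ^ 2 ≠ 0 := pow_ne_zero 2 hx
  rw [cot_eq_cos_div_sin, div_pow, cos_two_mul']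
  field_simp
  linear_combination (cos x ^ 2 - sin x ^ 2) * cos_sq_add_sin_sq x

theorem cos_nat_add_two_mul_add_cos_nat_mul (n : ℕ) (x : ℝ) :
    cos ((n + 2 : ℕ) * x) + cos (n * x) = 2 * cos x * cos ((n + 1 : ℕ) * x) := by
  have h₁ : ((n + 2 : ℕ) : ℝ) * x = (n + 1 : ℕ) * x + x := by push_cast; ring
  have h₂ : (n : ℝ) * x = (n + 1 : ℕ) * x - x := by push_cast; ring
  rw [h₁, h₂, cos_add, cos_sub]
  ring

section SubringClass

variable {S : Type*} [SetLike S ℝ] {K : S} {x : ℝ}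

theorem cos_nat_mul_mem [SubringClass S ℝ] (hx : cos x ∈ K) (n : ℕ) : cos (n * x) ∈ K := by
  induction n using Nat.twoStepInduction with
  | zero => simp [one_mem K]
  | one => simpa using hx
  | more n ih₀ ih₁ =>
    rw [← add_sub_cancel_right (cos _) (cos (n * x)), cos_nat_add_two_mul_add_cos_nat_mul]
    exact sub_mem (mul_mem (mul_mem (ofNat_mem K 2) hx) ih₁) ih₀

theorem cos_two_mul_mem_of_cot_mem [SubfieldClass S ℝ] (hx : sin x ≠ 0) (hK : cot x ∈ K) :
    cos (2 * x) ∈ K := by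
  rw [cos_two_mul_eq_cot_sq x hx]
  exact div_mem (sub_mem (pow_mem hK 2) (one_mem K)) (add_mem (pow_mem hK 2) (one_mem K))

end SubringClass

theorem sin_pi_div_ne_zero {n : ℕ} (hn : 1 < n) : sin (π / n) ≠ 0 := by
  have hn' : (1 : ℝ) < n := by exact_mod_cast hn
  refine (sin_pos_of_pos_of_lt_pi (by positivity) ?_).ne'
  exact div_lt_self pi_pos hn'

end Real

theorem cos_two_pi_div_mem_adjoin_cot_general (d m n : ℕ) (hm : 0 < m)
    (hd1 : 1 < d) (hdm : n = d * m) :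
    Real.cos (2 * Real.pi / (d : ℝ)) ∈
        IntermediateField.adjoin ℚ {Real.cot (Real.pi / (n : ℝ))} ∧
      IntermediateField.adjoin ℚ {Real.cos (2 * Real.pi / (d : ℝ))} ≤
        IntermediateField.adjoin ℚ {Real.cot (Real.pi / (n : ℝ))} := by
  have hn : 1 < n := hdm ▸ one_lt_mul_of_lt_of_le hd1 hm
  have hcos : cos (2 * (π / n)) ∈ IntermediateField.adjoin ℚ {cot (π / n)} :=
    cos_two_mul_mem_of_cot_mem (sin_pi_div_ne_zero hn)
      (IntermediateField.mem_adjoin_simple_self ℚ _)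
  have hangle : 2 * π / d = m * (2 * (π / n)) := by
    have hm' : (m : ℝ) ≠ 0 := by positivity
    rw [hdm, Nat.cast_mul]
    field_simp
  have hmem : cos (2 * π / d) ∈ IntermediateField.adjoin ℚ {cot (π / n)} :=
    hangle ▸ cos_nat_mul_mem hcos m
  exact ⟨hmem, IntermediateField.adjoin_simple_le_iff.mpr hmem⟩

/-- If `d > 1` and `n = d * m`, then `cos (2π / d)` lies in `ℚ(cot (π / n))`;
consequently `ℚ(cos (2π / d))` is a subfield of `ℚ(cot (π / n))`. -/
theorem cos_two_pi_div_mem_adjoin_cot (d m n : ℕ) (hd : 0 < d) (hm : 0 < m) (hn : 0 < n)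
    (hd1 : 1 < d) (hdm : n = d * m) :
    Real.cos (2 * Real.pi / (d : ℝ)) ∈
        IntermediateField.adjoin ℚ {Real.cot (Real.pi / (n : ℝ))} ∧
      IntermediateField.adjoin ℚ {Real.cos (2 * Real.pi / (d : ℝ))} ≤
        IntermediateField.adjoin ℚ {Real.cot (Real.pi / (n : ℝ))} :=
  cos_two_pi_div_mem_adjoin_cot_general d m n hm hd1 hdm
end

section
/- Let n ≥ 1 be an integer and let m be a positive integer not divisible by n. Then cot(mπ/n) belongs to the subfield ℚ(cot(π/n)) of ℝ generated over ℚ by cot(π/n). -/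
/-- For `n ≥ 1` and a positive integer `m` not divisible by `n`, the number
`cot (m π / n)` lies in the field `ℚ(cot (π / n))`. -/
theorem cot_mul_pi_div_mem_adjoin (n m : ℕ) (hn : 1 ≤ n) (hm : 0 < m) (hnd : ¬ n ∣ m) :
    Real.cot ((m : ℝ) * Real.pi / (n : ℝ)) ∈
      IntermediateField.adjoin ℚ {Real.cot (Real.pi / (n : ℝ))} := by
  have hn1 : n ≠ 1 := by rintro rfl; exact hnd (one_dvd m)
  have hn2 : 2 ≤ n := by omega
  have hnR : (0:ℝ) < n := by exact_mod_cast Nat.pos_of_ne_zero (by omega)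
  set θ : ℝ := Real.pi / n with hθ
  have hθpos : 0 < θ := div_pos Real.pi_pos hnR
  have hθlt : θ < Real.pi :=
    div_lt_self Real.pi_pos (by exact_mod_cast (by omega : 1 < n))
  have hs : Real.sin θ ≠ 0 := ne_of_gt (Real.sin_pos_of_pos_of_lt_pi hθpos hθlt)
  set t : ℝ := Real.cot θ with htdef
  set F := IntermediateField.adjoin ℚ {t} with hF
  have htF : t ∈ F := IntermediateField.mem_adjoin_simple_self ℚ t
  have key : ∀ k : ℕ, ∃ a b : ℝ, a ∈ F ∧ b ∈ F ∧
      ((t:ℂ) + Complex.I) ^ k = (a:ℂ) + (b:ℂ) * Complex.I := by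
    intro k
    induction k with
    | zero => exact ⟨1, 0, one_mem F, zero_mem F, by simp⟩
    | succ k ih =>
      obtain ⟨a, b, haF, hbF, he⟩ := ih
      refine ⟨a*t - b, a + b*t, sub_mem (mul_mem haF htF) hbF,
        add_mem haF (mul_mem hbF htF), ?_⟩
      rw [pow_succ, he]
      push_cast
      simp only [Complex.ext_iff, Complex.add_re, Complex.add_im, Complex.mul_re,
        Complex.mul_im, Complex.ofReal_re, Complex.ofReal_im, Complex.I_re, Complex.I_im,
        Complex.sub_re, Complex.sub_im]
      constructor <;> ring
  obtain ⟨a, b, haF, hbF, he⟩ := key m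
  have hz : ((t:ℂ) + Complex.I) * (Real.sin θ : ℂ)
      = Complex.cos θ + Complex.sin θ * Complex.I := by
    have ht : t * Real.sin θ = Real.cos θ := by
      rw [htdef, Real.cot_eq_cos_div_sin]; field_simp
    calc ((t:ℂ) + Complex.I) * (Real.sin θ : ℂ)
        = ((t * Real.sin θ : ℝ) : ℂ) + ((Real.sin θ : ℝ):ℂ) * Complex.I := by
          push_cast; ring
      _ = Complex.cos θ + Complex.sin θ * Complex.I := by
          rw [ht, Complex.ofReal_cos, Complex.ofReal_sin]
  have hpow : ((t:ℂ) + Complex.I) ^ m * ((Real.sin θ : ℝ) : ℂ) ^ m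
      = (Real.cos ((m:ℝ)*θ) : ℂ) + (Real.sin ((m:ℝ)*θ) : ℂ) * Complex.I := by
    rw [← mul_pow, hz, Complex.cos_add_sin_mul_I_pow]
    rw [← Complex.ofReal_natCast, ← Complex.ofReal_mul, Complex.ofReal_cos, Complex.ofReal_sin]
  have heq : ((a:ℂ) + (b:ℂ) * Complex.I) * ((Real.sin θ ^ m : ℝ) : ℂ)
      = (Real.cos ((m:ℝ)*θ) : ℂ) + (Real.sin ((m:ℝ)*θ) : ℂ) * Complex.I := by
    rw [Complex.ofReal_pow, ← he, hpow]
  have ha : a * (Real.sin θ) ^ m = Real.cos ((m:ℝ)*θ) := by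
    have h := congrArg Complex.re heq
    simp only [Complex.add_re, Complex.mul_re, Complex.mul_im, Complex.add_im,
      Complex.ofReal_re, Complex.ofReal_im, Complex.I_re, Complex.I_im,
      mul_zero, mul_one, zero_mul, sub_zero, add_zero, zero_add, zero_sub] at h
    linarith
  have hb : b * (Real.sin θ) ^ m = Real.sin ((m:ℝ)*θ) := by
    have h := congrArg Complex.im heq
    simp only [Complex.add_re, Complex.mul_re, Complex.mul_im, Complex.add_im,
      Complex.ofReal_re, Complex.ofReal_im, Complex.I_re, Complex.I_im,
      mul_zero, mul_one, zero_mul, sub_zero, add_zero, zero_add, zero_sub] at h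
    linarith
  have hms : Real.sin ((m:ℝ)*θ) ≠ 0 := by
    intro h
    rw [Real.sin_eq_zero_iff] at h
    obtain ⟨k, hk⟩ := h
    apply hnd
    have hπ : Real.pi ≠ 0 := Real.pi_ne_zero
    have hkn : (k:ℝ) * n = m := by
      have h1 : (k:ℝ) * Real.pi * n = (m:ℝ) * Real.pi := by
        rw [hk, hθ]; field_simp
      have h2 : ((k:ℝ) * n) * Real.pi = (m:ℝ) * Real.pi := by linarith [h1]
      exact mul_right_cancel₀ hπ h2
    have hkz : (k:ℤ) * n = m := by exact_mod_cast hkn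
    have : (n:ℤ) ∣ (m:ℤ) := ⟨k, by linarith⟩
    exact_mod_cast this
  have hcot : Real.cot ((m : ℝ) * Real.pi / (n : ℝ)) = a / b := by
    have harg : (m : ℝ) * Real.pi / (n : ℝ) = (m:ℝ) * θ := by rw [hθ]; ring
    rw [harg, Real.cot_eq_cos_div_sin, ← ha, ← hb,
      mul_div_mul_right _ _ (pow_ne_zero m hs)]
  rw [hcot]
  have hbne : b ≠ 0 := by
    intro h0
    apply hms
    rw [← hb, h0, zero_mul]
  exact div_mem haF hbF
end

section
/- Let r₁, …, rₙ be nonnegative rational numbers and let F = ℚ(√r₁, …, √rₙ) be the subfield of ℝ they generate over ℚ. Then F is flat: for every subfield E of F containing ℚ, the extension E/ℚ is Galois and every field automorphism σ of E satisfies σ ∘ σ = id. -/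
/-!
If `F = K(S)` with `s ^ 2 ∈ K` for every `s ∈ S`, any `K`-automorphism `τ` of `F` sends each
generator `s` to `±s`, so `τ ^ 2` fixes the generators and is the identity. Moreover `F / K` is
normal, since the minimal polynomial of `s` divides `X ^ 2 - s ^ 2 = (X - s) (X + s)`; over a
perfect field it is therefore Galois, with a Galois group of exponent dividing `2`, hence abelian.
Every intermediate field `E` of an abelian extension is Galois, and `Gal(E/K)` is a quotient of
`Gal(F/K)`, so its exponent divides `2` as well.
-/

open Polynomial IntermediateField

variable {K L : Type*} [Field K] [Field L] [Algebra K L]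

theorem isIntegral_of_sq_eq_algebraMap {a : K} {x : L} (hx : x ^ 2 = algebraMap K L a) :
    IsIntegral K x :=
  .of_pow two_pos (hx ▸ isIntegral_algebraMap)

theorem minpoly_map_splits_of_sq_eq_algebraMap {M : Type*} [Field M] [Algebra K M] {a : K}
    {x : L} {y : M} (hx : x ^ 2 = algebraMap K L a) (hy : y ^ 2 = algebraMap K M a) :
    ((minpoly K x).map (algebraMap K M)).Splits := by
  have hmonic : (X ^ 2 - C a).Monic := monic_X_pow_sub_C a two_ne_zero
  have hfactor : (X ^ 2 - C a).map (algebraMap K M) = (X + C y) * (X - C y) := by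
    rw [← sq_sub_sq, ← C_pow, hy]
    simp
  have hsplits : ((X ^ 2 - C a).map (algebraMap K M)).Splits :=
    hfactor ▸ (Splits.X_add_C y).mul (Splits.X_sub_C y)
  have hdvd : minpoly K x ∣ X ^ 2 - C a := minpoly.dvd K x (by simp [hx])
  exact hsplits.of_dvd (hmonic.map _).ne_zero (Polynomial.map_dvd _ hdvd)

section AdjoinSqrts

variable {S : Set L} (hS : ∀ x ∈ S, ∃ a : K, x ^ 2 = algebraMap K L a)
include hS

theorem normal_adjoin_of_sq_eq_algebraMap : Normal K (adjoin K S) := by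
  have hint : ∀ x ∈ S, IsIntegral K x := fun x hx =>
    let ⟨_, ha⟩ := hS x hx
    isIntegral_of_sq_eq_algebraMap ha
  have := isAlgebraic_adjoin hint
  refine normal_iff.2 fun y => ⟨Algebra.IsIntegral.isIntegral y, ?_⟩
  rw [minpoly_eq]
  refine splits_of_mem_adjoin K L (fun x hx => ⟨hint x hx, ?_⟩) y.2
  obtain ⟨a, ha⟩ := hS x hx
  exact minpoly_map_splits_of_sq_eq_algebraMap ha (y := ⟨x, subset_adjoin K S hx⟩)
    (Subtype.ext ha)

theorem isGalois_adjoin_of_sq_eq_algebraMap [PerfectField K] : IsGalois K (adjoin K S) :=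
  have := normal_adjoin_of_sq_eq_algebraMap hS
  isGalois_iff.2 ⟨inferInstance, this⟩

theorem exponent_gal_adjoin_dvd_two_of_sq_eq_algebraMap :
    Monoid.exponent Gal(adjoin K S/K) ∣ 2 := by
  refine Monoid.exponent_dvd_of_forall_pow_eq_one fun τ => AlgEquiv.coe_toAlgHom_injective ?_
  refine adjoin_algHom_ext K fun x hx => ?_
  obtain ⟨a, ha⟩ := hS x hx
  set y : adjoin K S := ⟨x, subset_adjoin K S hx⟩
  have hy : τ y ^ 2 = y ^ 2 := by
    rw [← map_pow, show y ^ 2 = algebraMap K _ a from Subtype.ext ha, AlgEquiv.commutes]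
  rcases sq_eq_sq_iff_eq_or_eq_neg.mp hy with h | h <;> simp [pow_two, h]

end AdjoinSqrts

theorem IsAbelianGalois.of_exponent_dvd_two [IsGalois K L] (h : Monoid.exponent Gal(L/K) ∣ 2) :
    IsAbelianGalois K L where
  is_comm.comm σ τ :=
    Commute.of_orderOf_dvd_two (fun g => (Monoid.order_dvd_exponent g).trans h) σ τ

theorem Monoid.exponent_gal_dvd_of_algHom {M : Type*} [Field M] [Algebra K M] [Normal K L]
    [Normal K M] (f : L →ₐ[K] M) : Monoid.exponent Gal(L/K) ∣ Monoid.exponent Gal(M/K) :=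
  letI := f.toRingHom.toAlgebra
  haveI := IsScalarTower.of_algebraMap_eq' f.comp_algebraMap.symm
  MonoidHom.exponent_dvd (AlgEquiv.restrictNormalHom_surjective M)

theorem IsGalois.of_algHom_of_exponent_dvd_two {M : Type*} [Field M] [Algebra K M]
    [IsGalois K M] (f : L →ₐ[K] M) (h : Monoid.exponent Gal(M/K) ∣ 2) :
    IsGalois K L ∧ Monoid.exponent Gal(L/K) ∣ 2 :=
  have := IsAbelianGalois.of_exponent_dvd_two h
  have : IsGalois K L := (IsAbelianGalois.of_algHom f).toIsGalois
  ⟨this, (Monoid.exponent_gal_dvd_of_algHom f).trans h⟩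

/-- If `r 1, …, r n` are nonnegative rationals and
`F = ℚ(√(r 1), …, √(r n))` as a subfield of `ℝ`, then `F` is flat: for every
subfield `E` of `F` (containing `ℚ`), the extension `E / ℚ` is Galois and
every field automorphism of `E` squares to the identity. -/
theorem adjoin_sqrts_flat (n : ℕ) (r : Fin n → ℚ) (hr : ∀ i, 0 ≤ r i) :
    ∀ E : IntermediateField ℚ ℝ,
      E ≤ IntermediateField.adjoin ℚ (Set.range fun i => Real.sqrt ((r i : ℝ))) →
        IsGalois ℚ E ∧ ∀ σ : E ≃+* E, ∀ x : E, σ (σ x) = x := by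
  intro E hE
  have hS : ∀ x ∈ Set.range fun i => Real.sqrt (r i : ℝ),
      ∃ a : ℚ, x ^ 2 = algebraMap ℚ ℝ a := by
    rintro _ ⟨i, rfl⟩
    exact ⟨r i, by simp [Real.sq_sqrt (Rat.cast_nonneg.mpr (hr i))]⟩
  have := isGalois_adjoin_of_sq_eq_algebraMap hS
  obtain ⟨hgal, hexp⟩ := IsGalois.of_algHom_of_exponent_dvd_two (inclusion hE)
    (exponent_gal_adjoin_dvd_two_of_sq_eq_algebraMap hS)
  refine ⟨hgal, fun σ x => ?_⟩
  let σ' : Gal(E/ℚ) := .ofRingEquiv (f := σ) fun q => by simp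
  have hσ' : σ' * σ' = 1 := by
    rw [← pow_two]
    exact Monoid.exponent_dvd_iff_forall_pow_eq_one.mp hexp σ'
  exact congr($hσ' x)
end

section
/- Let r₁, …, rₙ be nonnegative rational numbers, let ε₂, …, εₙ ∈ {−1, +1}, and let t = √r₁ + ε₂√r₂ + ⋯ + εₙ√rₙ. Then the field ℚ(t) is flat: for every subfield E of ℚ(t) containing ℚ, the extension E/ℚ is Galois and every field automorphism σ of E satisfies σ ∘ σ = id. -/
/-!
Every `√rᵢ` is a root of `p = ∏ (X² - rᵢ)`, so `ℚ(t)` lies in the splitting field `K ⊆ ℝ`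
of `p`. The Galois group of `K/ℚ` has exponent two, since an automorphism sends each generator
`y` (with `y² ∈ ℚ`) to `±y`; in particular it is abelian. Hence every subfield `E` of `K` is
Galois over `ℚ`, and every automorphism of `E` is `ℚ`-linear and extends to `K` by normality,
so it squares to the identity as well.
-/

open IntermediateField Polynomial

section ExponentTwo

variable {F K L : Type*} [Field F] [Field K] [Field L] [Algebra F K] [Algebra F L]

theorem AlgEquiv.involutive_of_adjoin_eq_top_of_sq_mem {S : Set K}
    (hS : ∀ y ∈ S, y ^ 2 ∈ Set.range (algebraMap F K)) (hadj : Algebra.adjoin F S = ⊤)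
    (σ : K ≃ₐ[F] K) : Function.Involutive σ := by
  have hgen :
      Algebra.adjoin F S ≤ AlgHom.equalizer ((σ : K →ₐ[F] K).comp σ) (AlgHom.id F K) := by
    refine Algebra.adjoin_le fun y hy => ?_
    obtain ⟨a, ha⟩ := hS y hy
    have hsq : σ y ^ 2 = y ^ 2 := by rw [← map_pow, ← ha, AlgEquiv.commutes]
    rcases sq_eq_sq_iff_eq_or_eq_neg.1 hsq with h | h <;> simp [h]
  exact fun x => hgen (hadj ▸ Algebra.mem_top)

theorem sq_mem_range_of_mem_rootSet_prod_X_sq_sub_C {ι : Type*} [Fintype ι] {r : ι → F}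
    {y : K} (hy : y ∈ (∏ i, (X ^ 2 - C (r i))).rootSet K) : y ^ 2 ∈ Set.range (algebraMap F K) := by
  obtain ⟨i, -, hi⟩ := Finset.prod_eq_zero_iff.1 (by simpa using (mem_rootSet.1 hy).2)
  exact ⟨r i, (sub_eq_zero.1 (by simpa using hi)).symm⟩

theorem AlgEquiv.involutive_of_isSplittingField_prod_X_sq_sub_C {ι : Type*} [Fintype ι]
    (r : ι → F) [IsSplittingField F K (∏ i, (X ^ 2 - C (r i)))] (σ : K ≃ₐ[F] K) :
    Function.Involutive σ :=
  σ.involutive_of_adjoin_eq_top_of_sq_mem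
    (fun _ => sq_mem_range_of_mem_rootSet_prod_X_sq_sub_C (r := r))
    (IsSplittingField.adjoin_rootSet K _)

theorem IsAbelianGalois.of_involutive [IsGalois F K]
    (h : ∀ σ : K ≃ₐ[F] K, Function.Involutive σ) : IsAbelianGalois F K where
  is_comm := ⟨fun σ τ => (Commute.of_orderOf_dvd_two (fun g => orderOf_dvd_of_pow_eq_one
    (AlgEquiv.ext (h g))) σ τ).eq⟩

theorem IsGalois.of_algHom_of_involutive [IsGalois F K]
    (h : ∀ σ : K ≃ₐ[F] K, Function.Involutive σ) (f : L →ₐ[F] K) : IsGalois F L :=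
  have := IsAbelianGalois.of_involutive h
  (IsAbelianGalois.of_algHom f).toIsGalois

theorem AlgEquiv.involutive_of_algHom [Normal F K]
    (h : ∀ τ : K ≃ₐ[F] K, Function.Involutive τ) (f : L →ₐ[F] K) (σ : L ≃ₐ[F] L) :
    Function.Involutive σ := by
  let := f.toRingHom.toAlgebra
  have := IsScalarTower.of_algebraMap_eq' f.comp_algebraMap.symm
  intro x
  apply (algebraMap L K).injective
  rw [← σ.liftNormal_commutes K, ← σ.liftNormal_commutes K, h]

end ExponentTwo

theorem aeval_sqrt_X_sq_sub_C {q : ℚ} (hq : 0 ≤ q) : aeval √(q : ℝ) (X ^ 2 - C q) = 0 := by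
  simp [Real.sq_sqrt (Rat.cast_nonneg.2 hq)]

theorem splits_map_prod_X_sq_sub_C {ι : Type*} [Fintype ι] {r : ι → ℚ} (hr : ∀ i, 0 ≤ r i) :
    ((∏ i, (X ^ 2 - C (r i))).map (algebraMap ℚ ℝ)).Splits := by
  rw [Polynomial.map_prod]
  refine Splits.prod fun i _ => Splits.of_natDegree_eq_two (x := √(r i : ℝ)) ?_ ?_
  · simp
  · rw [eval_map_algebraMap, aeval_sqrt_X_sq_sub_C (hr i)]

theorem sqrt_mem_rootSet_prod_X_sq_sub_C {ι : Type*} [Fintype ι] {r : ι → ℚ}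
    (hr : ∀ i, 0 ≤ r i) (i : ι) : √(r i : ℝ) ∈ (∏ i, (X ^ 2 - C (r i))).rootSet ℝ := by
  have hmonic : (∏ i, (X ^ 2 - C (r i))).Monic :=
    monic_prod_of_monic _ _ fun i _ => monic_X_pow_sub_C _ two_ne_zero
  refine mem_rootSet.2 ⟨hmonic.ne_zero, ?_⟩
  rw [map_prod]
  exact Finset.prod_eq_zero (Finset.mem_univ i) (aeval_sqrt_X_sq_sub_C (hr i))

theorem adjoin_sum_sqrts_flat_general (n : ℕ) (r : Fin n → ℚ) (hr : ∀ i, 0 ≤ r i)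
    (ε : Fin n → ℝ) (hε : ∀ i, ε i = 1 ∨ ε i = -1)
    (t : ℝ) (ht : t = ∑ i, ε i * Real.sqrt ((r i : ℝ))) :
    ∀ E : IntermediateField ℚ ℝ, E ≤ IntermediateField.adjoin ℚ {t} →
      IsGalois ℚ E ∧ ∀ σ : E ≃+* E, ∀ x : E, σ (σ x) = x := by
  intro E hE
  set p : ℚ[X] := ∏ i, (X ^ 2 - C (r i))
  set K := adjoin ℚ (p.rootSet ℝ)
  have : IsSplittingField ℚ K p := adjoin_rootSet_isSplittingField (splits_map_prod_X_sq_sub_C hr)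
  have : Normal ℚ K := Normal.of_isSplittingField p
  have : IsGalois ℚ K := ⟨⟩
  have hK := AlgEquiv.involutive_of_isSplittingField_prod_X_sq_sub_C (K := K) r
  have hsqrt (i : Fin n) : √(r i : ℝ) ∈ K :=
    subset_adjoin ℚ _ (sqrt_mem_rootSet_prod_X_sq_sub_C hr i)
  have htK : t ∈ K := ht ▸ sum_mem fun i _ => by
    rcases hε i with h | h <;> simp [h, hsqrt i, K.neg_mem]
  have hEK : E ≤ K := hE.trans (adjoin_simple_le_iff.2 htK)
  exact ⟨IsGalois.of_algHom_of_involutive hK (inclusion hEK),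
    fun σ => AlgEquiv.involutive_of_algHom hK (inclusion hEK) σ.toRatAlgEquiv⟩

/-- If `t = √r₁ ± √r₂ ± ⋯ ± √rₙ` with the `rᵢ` nonnegative rationals
(first sign `+`), then `ℚ(t)` is flat: for every subfield `E` of `ℚ(t)`
(containing `ℚ`), the extension `E / ℚ` is Galois and every field
automorphism of `E` squares to the identity. -/
theorem adjoin_sum_sqrts_flat (n : ℕ) (hn : 0 < n) (r : Fin n → ℚ) (hr : ∀ i, 0 ≤ r i)
    (ε : Fin n → ℝ) (hε : ∀ i, ε i = 1 ∨ ε i = -1) (hε0 : ε ⟨0, hn⟩ = 1)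
    (t : ℝ) (ht : t = ∑ i, ε i * Real.sqrt ((r i : ℝ))) :
    ∀ E : IntermediateField ℚ ℝ, E ≤ IntermediateField.adjoin ℚ {t} →
      IsGalois ℚ E ∧ ∀ σ : E ≃+* E, ∀ x : E, σ (σ x) = x :=
  adjoin_sum_sqrts_flat_general n r hr ε hε t ht
end

section
/- Let p be a prime number and let a, b, c be positive rational numbers satisfying a² = p(b² + c²). Then a + b√p is not the square of any element of the field ℚ(√p). -/
/-!
Write `x = u + v √p` with `u, v ∈ ℚ`. Since `√p ∉ ℚ`, comparing coefficients in `x² = a + b √p`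
gives `a = u² + p v²` and `b = 2 u v`, hence `a² - p b² = (u² - p v²)²`: the norm of `a + b √p` is
a rational square. But the hypothesis makes this norm `p c²`, and `p` is not a rational square.
-/

open IntermediateField

section QuadraticExtension

variable {K L : Type*} [Field K] [Field L] [Algebra K L] {d : K} {s : L}

theorem notMem_range_algebraMap_of_sq_eq (hs : s ^ 2 = algebraMap K L d) (hd : ¬IsSquare d) :
    s ∉ Set.range (algebraMap K L) := by
  rintro ⟨r, rfl⟩
  exact hd ⟨r, (algebraMap K L).injective (by rw [map_mul, ← sq, hs])⟩

theorem eq_and_eq_of_add_mul_eq_add_mul (hs : s ∉ Set.range (algebraMap K L)) {u v u' v' : K}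
    (h : algebraMap K L u + algebraMap K L v * s = algebraMap K L u' + algebraMap K L v' * s) :
    u = u' ∧ v = v' := by
  by_cases hv : v = v'
  · subst hv
    exact ⟨(algebraMap K L).injective (add_right_cancel h), rfl⟩
  · refine absurd ⟨(u' - u) / (v - v'), ?_⟩ hs
    have hv' : algebraMap K L v - algebraMap K L v' ≠ 0 := by
      rwa [← map_sub, map_ne_zero, sub_ne_zero]
    rw [map_div₀, map_sub, map_sub, div_eq_iff hv']
    linear_combination -h

theorem exists_eq_add_mul_of_mem_adjoin_of_sq_eq (hs : s ^ 2 = algebraMap K L d) {x : L}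
    (hx : x ∈ K⟮s⟯) : ∃ u v : K, x = algebraMap K L u + algebraMap K L v * s := by
  have hint : IsIntegral K s := .of_pow two_pos (hs ▸ isIntegral_algebraMap)
  rw [← mem_toSubalgebra, adjoin_simple_toSubalgebra_of_isAlgebraic hint.isAlgebraic] at hx
  induction hx using Algebra.adjoin_induction with
  | mem y hy => exact ⟨0, 1, by rw [Set.mem_singleton_iff.mp hy]; simp⟩
  | algebraMap q => exact ⟨q, 0, by simp⟩
  | add y z _ _ hy hz =>
    obtain ⟨u₁, v₁, rfl⟩ := hy
    obtain ⟨u₂, v₂, rfl⟩ := hz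
    exact ⟨u₁ + u₂, v₁ + v₂, by simp only [map_add]; ring⟩
  | mul y z _ _ hy hz =>
    obtain ⟨u₁, v₁, rfl⟩ := hy
    obtain ⟨u₂, v₂, rfl⟩ := hz
    refine ⟨u₁ * u₂ + d * v₁ * v₂, u₁ * v₂ + u₂ * v₁, ?_⟩
    simp only [map_add, map_mul]
    linear_combination (algebraMap K L v₁ * algebraMap K L v₂) * hs

theorem isSquare_sq_sub_mul_sq_of_sq_eq_add_mul (hs : s ^ 2 = algebraMap K L d)
    (hd : ¬IsSquare d) {x : L} (hx : x ∈ K⟮s⟯) {a b : K}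
    (hxab : x ^ 2 = algebraMap K L a + algebraMap K L b * s) : IsSquare (a ^ 2 - d * b ^ 2) := by
  obtain ⟨u, v, rfl⟩ := exists_eq_add_mul_of_mem_adjoin_of_sq_eq hs hx
  have hsq : algebraMap K L (u ^ 2 + d * v ^ 2) + algebraMap K L (2 * u * v) * s =
      algebraMap K L a + algebraMap K L b * s := by
    simp only [map_add, map_mul, map_pow, map_ofNat]
    linear_combination hxab - algebraMap K L v ^ 2 * hs
  obtain ⟨rfl, rfl⟩ :=
    eq_and_eq_of_add_mul_eq_add_mul (notMem_range_algebraMap_of_sq_eq hs hd) hsq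
  exact ⟨u ^ 2 - d * v ^ 2, by ring⟩

end QuadraticExtension

theorem not_isSquare_mul_sq {K : Type*} [Field K] {d c : K} (hd : ¬IsSquare d) (hc : c ≠ 0) :
    ¬IsSquare (d * c ^ 2) := fun h ↦
  hd (by simpa [hc] using h.div (IsSquare.sq c))

theorem not_sq_in_adjoin_sqrt_general (p : ℕ) (hp : p.Prime) (a b c : ℚ)
    (hc : 0 < c)
    (habc : a ^ 2 = (p : ℚ) * (b ^ 2 + c ^ 2)) :
    ¬ ∃ x ∈ IntermediateField.adjoin ℚ {Real.sqrt (p : ℝ)},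
      x ^ 2 = (a : ℝ) + (b : ℝ) * Real.sqrt (p : ℝ) := by
  rintro ⟨x, hx, hxab⟩
  have hs : Real.sqrt p ^ 2 = algebraMap ℚ ℝ p := by simp
  have hp_sq : ¬IsSquare (p : ℚ) := Rat.isSquare_natCast_iff.not.mpr hp.prime.not_isSquare
  have hnorm := isSquare_sq_sub_mul_sq_of_sq_eq_add_mul hs hp_sq hx (a := a) (b := b) (by simpa)
  exact not_isSquare_mul_sq hp_sq hc.ne' (by convert hnorm using 1; linear_combination -habc)

/-- If `p` is prime and `a, b, c` are positive rationals with
`a² = p (b² + c²)`, then `a + b √p` is not the square of an element of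
`ℚ(√p)`. -/
theorem not_sq_in_adjoin_sqrt (p : ℕ) (hp : p.Prime) (a b c : ℚ)
    (ha : 0 < a) (hb : 0 < b) (hc : 0 < c)
    (habc : a ^ 2 = (p : ℚ) * (b ^ 2 + c ^ 2)) :
    ¬ ∃ x ∈ IntermediateField.adjoin ℚ {Real.sqrt (p : ℝ)},
      x ^ 2 = (a : ℝ) + (b : ℝ) * Real.sqrt (p : ℝ) :=
  not_sq_in_adjoin_sqrt_general p hp a b c hc habc
end

section
/- Let p be a prime number and let a, b, c be positive rational numbers satisfying a² = p(b² + c²). Then θ = √(a + b√p) has degree 4 over ℚ, with minimal polynomial X⁴ − 2aX² + (a² − pb²). -/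
/-!
From `θ² = a + b√p` we get `(θ² - a)² = p b²`, so `θ` is a root of the monic quartic
`q = X⁴ - 2aX² + (a² - p b²)` and its minimal polynomial divides `q`. A rational root `x` of `q`
would make `p b² = (x² - a)²` a rational square, so every factor of `q` has even degree. If the
minimal polynomial had degree 2, then `θ ∈ ℚ(θ²) = ℚ(√p)`, say `θ = s + t√p`; comparing
coefficients in `θ² = a + b√p` gives `s² + p t² = a` and `2st = b`, hence
`p c² = a² - p b² = (s² - p t²)²`, again a rational square. So the degree is 4 and the minimal
polynomial is `q`.
-/

open Polynomial

namespace Polynomial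

variable {K : Type*} [Field K]

theorem Monic.eq_X_sq_add_C_mul_X_add_C {m : K[X]} (hm : m.Monic) (h : m.natDegree = 2) :
    m = X ^ 2 + C (m.coeff 1) * X + C (m.coeff 0) := by
  conv_lhs => rw [m.as_sum_range_C_mul_X_pow, h]
  rw [Finset.sum_range_succ, Finset.sum_range_succ, Finset.sum_range_one, ← h,
    hm.coeff_natDegree, h]
  simp only [C_1, one_mul, pow_one, pow_zero, mul_one]
  ring

theorem natDegree_ne_one_of_dvd_of_forall_not_isRoot {m q : K[X]} (hmq : m ∣ q)
    (hq : ∀ x, ¬q.IsRoot x) : m.natDegree ≠ 1 := fun h => by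
  obtain ⟨x, hx⟩ := exists_root_of_degree_eq_one (degree_eq_iff_natDegree_eq_of_pos one_pos |>.2 h)
  exact hq x (eval_eq_zero_of_dvd_of_eval_eq_zero hmq hx)

theorem natDegree_eq_zero_or_two_or_four_of_dvd {m q : K[X]} (hmq : m ∣ q) (hq4 : q.natDegree = 4)
    (hq : ∀ x, ¬q.IsRoot x) : m.natDegree = 0 ∨ m.natDegree = 2 ∨ m.natDegree = 4 := by
  obtain ⟨r, rfl⟩ := hmq
  have hmr : m * r ≠ 0 := ne_zero_of_natDegree_gt (n := 0) (by omega)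
  have hm : m ≠ 0 := left_ne_zero_of_mul hmr
  have hr : r ≠ 0 := right_ne_zero_of_mul hmr
  have hm1 := natDegree_ne_one_of_dvd_of_forall_not_isRoot (dvd_mul_right m r) hq
  have hr1 := natDegree_ne_one_of_dvd_of_forall_not_isRoot (dvd_mul_left r m) hq
  rw [natDegree_mul hm hr] at hq4
  omega

end Polynomial

theorem Irrational.add_mul_eq_zero_iff {r : ℝ} (hr : Irrational r) {x y : ℚ} :
    (x : ℝ) + y * r = 0 ↔ x = 0 ∧ y = 0 := by
  refine ⟨fun h => ?_, by rintro ⟨rfl, rfl⟩; simp⟩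
  obtain rfl : y = 0 := by
    by_contra hy
    exact (hr.mul_ratCast hy).ne_rat (-x) (by push_cast; linarith)
  simpa using h

section

variable {d : ℕ}

theorem not_isSquare_natCast_mul_sq (hd : Irrational √d) {c : ℚ} (hc : c ≠ 0) :
    ¬IsSquare ((d : ℚ) * c ^ 2) := by
  rintro ⟨r, hr⟩
  refine Rat.isSquare_natCast_iff.not.2 (irrational_sqrt_natCast_iff.1 hd) ⟨r / c, ?_⟩
  field_simp
  linear_combination hr

theorem sq_sub_mul_sq_eq_sq_of_sq_add_mul_sqrt (hd : Irrational √d) {a b s t : ℚ}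
    (h : ((s : ℝ) + t * √d) ^ 2 = a + b * √d) : a ^ 2 - d * b ^ 2 = (s ^ 2 - d * t ^ 2) ^ 2 := by
  have hsq : √(d : ℝ) ^ 2 = d := Real.sq_sqrt d.cast_nonneg
  obtain ⟨hrat, hirr⟩ := hd.add_mul_eq_zero_iff (x := s ^ 2 + d * t ^ 2 - a) (y := 2 * s * t - b)
    |>.1 (by push_cast; linear_combination h - t ^ 2 * hsq)
  linear_combination d * (2 * s * t + b) * hirr - (s ^ 2 + d * t ^ 2 + a) * hrat

theorem exists_eq_add_mul_sqrt_of_natDegree_minpoly_eq_two (hd : Irrational √d) {a b : ℚ}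
    (hb : b ≠ 0) {θ : ℝ} (hθ : θ ^ 2 = a + b * √d) (h2 : (minpoly ℚ θ).natDegree = 2) :
    ∃ s t : ℚ, θ = s + t * √d := by
  have hint : IsIntegral ℚ θ := by
    by_contra h
    simp [minpoly.eq_zero h] at h2
  set u := (minpoly ℚ θ).coeff 1
  set v := (minpoly ℚ θ).coeff 0
  have hroot : θ ^ 2 + u * θ + v = 0 := by
    have := minpoly.aeval ℚ θ
    rw [(minpoly.monic hint).eq_X_sq_add_C_mul_X_add_C h2] at this
    simpa using this
  have hu : u ≠ 0 := by
    rintro hu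
    rw [hu, Rat.cast_zero, zero_mul, add_zero] at hroot
    refine hb ((hd.add_mul_eq_zero_iff (x := a + v) (y := b)).1 ?_).2
    push_cast
    linear_combination hroot - hθ
  refine ⟨-(a + v) / u, -b / u, ?_⟩
  have hu' : (u : ℝ) ≠ 0 := by exact_mod_cast hu
  push_cast
  field_simp
  linear_combination hroot - hθ

theorem aeval_quartic_eq_zero_of_sq_eq {a b : ℚ} {θ : ℝ} (hθ : θ ^ 2 = a + b * √d) :
    aeval θ (X ^ 4 - C (2 * a) * X ^ 2 + C (a ^ 2 - (d : ℚ) * b ^ 2)) = 0 := by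
  have hsq : √(d : ℝ) ^ 2 = d := Real.sq_sqrt d.cast_nonneg
  simp only [map_add, map_sub, map_mul, map_pow, aeval_X, aeval_C, eq_ratCast]
  push_cast
  linear_combination (θ ^ 2 - a + b * √d) * hθ + b ^ 2 * hsq

theorem quartic_not_isRoot (hd : Irrational √d) {a b : ℚ} (hb : b ≠ 0) (x : ℚ) :
    ¬(X ^ 4 - C (2 * a) * X ^ 2 + C (a ^ 2 - (d : ℚ) * b ^ 2)).IsRoot x := by
  intro hx
  simp only [IsRoot, eval_add, eval_sub, eval_mul, eval_pow, eval_X, eval_C] at hx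
  exact not_isSquare_natCast_mul_sq hd hb ⟨x ^ 2 - a, by linear_combination -hx⟩

end

/-- If `p` is prime and `a, b, c` are positive rationals with
`a² = p (b² + c²)`, then `θ = √(a + b √p)` has degree `4` over `ℚ`, with
minimal polynomial `X⁴ - 2a X² + (a² - p b²)`. -/
theorem minpoly_sqrt_add_sqrt (p : ℕ) (hp : p.Prime) (a b c : ℚ)
    (ha : 0 < a) (hb : 0 < b) (hc : 0 < c)
    (habc : a ^ 2 = (p : ℚ) * (b ^ 2 + c ^ 2)) :
    (minpoly ℚ (Real.sqrt ((a : ℝ) + (b : ℝ) * Real.sqrt (p : ℝ)))).natDegree = 4 ∧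
      minpoly ℚ (Real.sqrt ((a : ℝ) + (b : ℝ) * Real.sqrt (p : ℝ))) =
        X ^ 4 - C (2 * a) * X ^ 2 + C (a ^ 2 - (p : ℚ) * b ^ 2) := by
  set θ := √((a : ℝ) + b * √p)
  set q : ℚ[X] := X ^ 4 - C (2 * a) * X ^ 2 + C (a ^ 2 - (p : ℚ) * b ^ 2)
  have hd := hp.irrational_sqrt
  have hθ : θ ^ 2 = a + b * √p := Real.sq_sqrt (by positivity)
  have hq_monic : q.Monic := by unfold q; monicity!
  have hq_deg : q.natDegree = 4 := by unfold q; compute_degree!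
  have hqθ : aeval θ q = 0 := aeval_quartic_eq_zero_of_sq_eq hθ
  have hint : IsIntegral ℚ θ := ⟨q, hq_monic, hqθ⟩
  have hmq : minpoly ℚ θ ∣ q := minpoly.dvd ℚ θ hqθ
  have hdeg : (minpoly ℚ θ).natDegree = 4 := by
    obtain h | h | h := natDegree_eq_zero_or_two_or_four_of_dvd hmq hq_deg
      (quartic_not_isRoot hd hb.ne')
    · exact absurd h (minpoly.natDegree_pos hint).ne'
    · obtain ⟨s, t, hst⟩ := exists_eq_add_mul_sqrt_of_natDegree_minpoly_eq_two hd hb.ne' hθ h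
      have hnorm := sq_sub_mul_sq_eq_sq_of_sq_add_mul_sqrt hd (hst ▸ hθ)
      exact absurd ⟨s ^ 2 - p * t ^ 2, by linear_combination hnorm - habc⟩
        (not_isSquare_natCast_mul_sq hd hc.ne')
    · exact h
  refine ⟨hdeg, (eq_of_monic_of_dvd_of_natDegree_le (minpoly.monic hint) hq_monic hmq ?_).symm⟩
  rw [hq_deg, hdeg]
end

section
/- Let p be a prime number and let a, b, c be positive rational numbers satisfying a² = p(b² + c²). Then the field ℚ(√(a + b√p)) is a Galois extension of ℚ of degree 4 whose Galois group is cyclic (of order 4). -/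
/-!
Write `s = √p` and `θ = √(a + b s)`. Since `(a + b s)(a - b s) = p c²`, the element `θ' = c s / θ`
is a square root of `a - b s`, so `ℚ(θ)` contains all four roots `±θ, ±θ'` of
`X⁴ - 2a X² + p c²`: it is a Galois extension of degree at most `4`. As `s` is irrational, some
automorphism `σ` maps `s` to `-s`. Then `θ σ(θ) = ±c s` changes sign under `σ`, which forces
`σ²(θ) = -θ`. Hence `σ` has order `4` and generates the Galois group.
-/

open Polynomial IntermediateField

namespace Polynomial

variable {F L : Type*} [Field F] [Field L] [Algebra F L]

noncomputable def biquadratic (a e : F) : F[X] := X ^ 4 - C (2 * a) * X ^ 2 + C e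

theorem natDegree_biquadratic (a e : F) : (biquadratic a e).natDegree = 4 := by
  unfold biquadratic
  compute_degree!

theorem biquadratic_ne_zero (a e : F) : biquadratic a e ≠ 0 :=
  ne_zero_of_natDegree_gt (n := 0) (by rw [natDegree_biquadratic]; norm_num)

variable {a e : F} {t t' : L}

theorem map_biquadratic (hsum : t ^ 2 + t' ^ 2 = algebraMap F L (2 * a))
    (hprod : (t * t') ^ 2 = algebraMap F L e) :
    (biquadratic a e).map (algebraMap F L) = (X - C t) * (X + C t) * (X - C t') * (X + C t') := by
  simp only [biquadratic, Polynomial.map_add, Polynomial.map_sub, Polynomial.map_mul,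
    Polynomial.map_pow, map_X, map_C]
  rw [← hsum, ← hprod]
  simp only [C_add, C_mul, C_pow]
  ring

theorem splits_biquadratic (hsum : t ^ 2 + t' ^ 2 = algebraMap F L (2 * a))
    (hprod : (t * t') ^ 2 = algebraMap F L e) :
    ((biquadratic a e).map (algebraMap F L)).Splits := by
  rw [map_biquadratic hsum hprod]
  exact (((Splits.X_sub_C t).mul (Splits.X_add_C t)).mul (Splits.X_sub_C t')).mul
    (Splits.X_add_C t')

theorem mem_rootSet_biquadratic (hsum : t ^ 2 + t' ^ 2 = algebraMap F L (2 * a))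
    (hprod : (t * t') ^ 2 = algebraMap F L e) {x : L} :
    x ∈ (biquadratic a e).rootSet L ↔ x = t ∨ x = -t ∨ x = t' ∨ x = -t' := by
  rw [mem_rootSet, aeval_def, ← eval_map, map_biquadratic hsum hprod]
  simp [biquadratic_ne_zero, sub_eq_zero, add_eq_zero_iff_eq_neg, or_assoc]

end Polynomial

section Galois

variable {F K : Type*} [Field F] [Field K] [Algebra F K]

theorem AlgEquiv.exists_apply_eq_neg_of_sq_mem_range [IsGalois F K] [FiniteDimensional F K]
    {s : K} (hs : s ∉ Set.range (algebraMap F K)) (hsq : s ^ 2 ∈ Set.range (algebraMap F K)) :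
    ∃ σ : K ≃ₐ[F] K, σ s = -s := by
  by_contra! hσ
  refine hs ((IsGalois.mem_range_algebraMap_iff_fixed s).mpr fun σ ↦ ?_)
  obtain ⟨d, hd⟩ := hsq
  have : σ s ^ 2 = s ^ 2 := by rw [← map_pow, ← hd, AlgEquiv.commutes]
  exact (sq_eq_sq_iff_eq_or_eq_neg.mp this).resolve_right (hσ σ)

theorem AlgEquiv.apply_apply_eq_neg_of_apply_eq_neg (σ : K ≃ₐ[F] K) {a b c d : F} {s t : K}
    (habc : a ^ 2 = d * (b ^ 2 + c ^ 2)) (hs : s ^ 2 = algebraMap F K d)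
    (ht : t ^ 2 = algebraMap F K a + algebraMap F K b * s) (ht0 : t ≠ 0) (hσ : σ s = -s) :
    σ (σ t) = -t := by
  have hσt : σ t ^ 2 = algebraMap F K a - algebraMap F K b * s := by
    rw [← map_pow, ht, map_add, map_mul, hσ, AlgEquiv.commutes, AlgEquiv.commutes]
    ring
  have hprod : (t * σ t) ^ 2 = (algebraMap F K c * s) ^ 2 := by
    have := congrArg (algebraMap F K) habc
    simp only [map_pow, map_mul, map_add] at this
    rw [mul_pow, ht, hσt, mul_pow, hs]
    linear_combination this - (algebraMap F K b) ^ 2 * hs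
  have hconj : σ (t * σ t) = -(t * σ t) := by
    rcases sq_eq_sq_iff_eq_or_eq_neg.mp hprod with h | h <;>
      simp only [h, map_neg, map_mul, AlgEquiv.commutes, hσ, mul_neg, neg_neg]
  have hσt0 : σ t ≠ 0 := by simpa using ht0
  apply mul_left_cancel₀ hσt0
  rw [← map_mul, hconj]
  ring

end Galois

section Adjoin

variable {F L : Type*} [Field F] [Field L] [Algebra F L]

theorem IntermediateField.normal_adjoin_simple_of_splits {p : F[X]}
    (hp : (p.map (algebraMap F L)).Splits) {α : L} (hα : α ∈ p.rootSet L)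
    (hroots : p.rootSet L ⊆ F⟮α⟯) : Normal F F⟮α⟯ := by
  have hadj : adjoin F (p.rootSet L) = F⟮α⟯ :=
    le_antisymm (adjoin_le_iff.mpr hroots) (adjoin_simple_le_iff.mpr (subset_adjoin F _ hα))
  have := adjoin_rootSet_isSplittingField hp
  rw [hadj] at this
  exact Normal.of_isSplittingField p

theorem IntermediateField.orderOf_eq_four_of_apply_apply_gen_eq_neg {α : L} (hα : -α ≠ α)
    (σ : F⟮α⟯ ≃ₐ[F] F⟮α⟯) (hσ : σ (σ (AdjoinSimple.gen F α)) = -AdjoinSimple.gen F α) :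
    orderOf σ = 4 := by
  refine orderOf_eq_prime_pow (p := 2) (n := 1) (fun h ↦ hα ?_) ?_
  · have := congrArg Subtype.val (hσ.symm.trans (congrArg (· (AdjoinSimple.gen F α)) h))
    simpa [pow_two] using this
  · apply AlgEquiv.coe_toAlgHom_injective
    refine adjoin_algHom_ext F fun x hx ↦ ?_
    have hgen : (⟨x, subset_adjoin F _ hx⟩ : F⟮α⟯) = AdjoinSimple.gen F α := Subtype.ext hx
    change (σ ^ 4) _ = _
    rw [hgen, pow_succ, pow_succ, pow_succ, pow_one]
    simp only [AlgEquiv.mul_apply, hσ, map_neg, neg_neg]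
    rfl

variable {a b c d : F} {s t : L}

/-- `c s / t` is the conjugate root `√(a - b s)`. -/
theorem sq_add_sq_div_and_sq_mul_div_of_sq_eq (habc : a ^ 2 = d * (b ^ 2 + c ^ 2))
    (hs : s ^ 2 = algebraMap F L d) (ht : t ^ 2 = algebraMap F L a + algebraMap F L b * s)
    (ht0 : t ≠ 0) :
    t ^ 2 + (algebraMap F L c * s / t) ^ 2 = algebraMap F L (2 * a) ∧
      (t * (algebraMap F L c * s / t)) ^ 2 = algebraMap F L (d * c ^ 2) := by
  have habc' := congrArg (algebraMap F L) habc
  simp only [map_pow, map_mul, map_add, map_ofNat] at habc' ⊢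
  constructor
  · field_simp
    linear_combination (t ^ 2 - algebraMap F L a + algebraMap F L b * s) * ht +
      ((algebraMap F L c) ^ 2 + (algebraMap F L b) ^ 2) * hs - habc'
  · rw [mul_div_cancel₀ _ ht0, mul_pow, hs, mul_comm]

theorem mem_rootSet_biquadratic_of_sq_eq (habc : a ^ 2 = d * (b ^ 2 + c ^ 2))
    (hs : s ^ 2 = algebraMap F L d) (ht : t ^ 2 = algebraMap F L a + algebraMap F L b * s)
    (ht0 : t ≠ 0) : t ∈ (biquadratic a (d * c ^ 2)).rootSet L :=
  have ⟨hsum, hprod⟩ := sq_add_sq_div_and_sq_mul_div_of_sq_eq habc hs ht ht0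
  (mem_rootSet_biquadratic hsum hprod).mpr (Or.inl rfl)

theorem finrank_adjoin_le_four {e : F} (h : t ∈ (biquadratic a e).rootSet L) :
    Module.finrank F F⟮t⟯ ≤ 4 := by
  rw [adjoin.finrank (isAlgebraic_of_mem_rootSet h).isIntegral, ← natDegree_biquadratic a e]
  exact natDegree_le_of_dvd (minpoly.dvd F t (mem_rootSet.mp h).2) (biquadratic_ne_zero a e)

theorem mem_adjoin_simple_of_sq_eq (hb : b ≠ 0)
    (ht : t ^ 2 = algebraMap F L a + algebraMap F L b * s) : s ∈ F⟮t⟯ := by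
  have : s = (t ^ 2 - algebraMap F L a) / algebraMap F L b := by
    rw [ht, eq_div_iff (by simpa using hb)]
    ring
  rw [this]
  exact div_mem (sub_mem (pow_mem (mem_adjoin_simple_self F t) 2) (F⟮t⟯.algebraMap_mem a))
    (F⟮t⟯.algebraMap_mem b)

theorem normal_adjoin_of_sq_eq (habc : a ^ 2 = d * (b ^ 2 + c ^ 2)) (hb : b ≠ 0)
    (hs : s ^ 2 = algebraMap F L d) (ht : t ^ 2 = algebraMap F L a + algebraMap F L b * s)
    (ht0 : t ≠ 0) : Normal F F⟮t⟯ := by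
  obtain ⟨hsum, hprod⟩ := sq_add_sq_div_and_sq_mul_div_of_sq_eq habc hs ht ht0
  have ht'mem : algebraMap F L c * s / t ∈ F⟮t⟯ := div_mem
    (mul_mem (F⟮t⟯.algebraMap_mem c) (mem_adjoin_simple_of_sq_eq hb ht))
    (mem_adjoin_simple_self F t)
  refine normal_adjoin_simple_of_splits (splits_biquadratic hsum hprod)
    (mem_rootSet_biquadratic_of_sq_eq habc hs ht ht0) fun x hx ↦ ?_
  rcases (mem_rootSet_biquadratic hsum hprod).mp hx with rfl | rfl | rfl | rfl
  · exact mem_adjoin_simple_self F x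
  · exact neg_mem (mem_adjoin_simple_self F t)
  · exact ht'mem
  · exact neg_mem ht'mem

theorem isGalois_and_finrank_eq_four_and_isCyclic_adjoin [CharZero F]
    (habc : a ^ 2 = d * (b ^ 2 + c ^ 2)) (hb : b ≠ 0) (hs : s ^ 2 = algebraMap F L d)
    (hs_irr : s ∉ Set.range (algebraMap F L))
    (ht : t ^ 2 = algebraMap F L a + algebraMap F L b * s) (ht0 : t ≠ 0) :
    IsGalois F F⟮t⟯ ∧ Module.finrank F F⟮t⟯ = 4 ∧ IsCyclic (F⟮t⟯ ≃ₐ[F] F⟮t⟯) := by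
  have hroot := mem_rootSet_biquadratic_of_sq_eq habc hs ht ht0
  have := adjoin.finiteDimensional (isAlgebraic_of_mem_rootSet hroot).isIntegral
  have := normal_adjoin_of_sq_eq habc hb hs ht ht0
  have : IsGalois F F⟮t⟯ := ⟨⟩
  set S : F⟮t⟯ := ⟨s, mem_adjoin_simple_of_sq_eq hb ht⟩
  set T := AdjoinSimple.gen F t
  have hS : S ^ 2 = algebraMap F F⟮t⟯ d := Subtype.ext hs
  have hT : T ^ 2 = algebraMap F F⟮t⟯ a + algebraMap F F⟮t⟯ b * S := Subtype.ext ht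
  obtain ⟨σ, hσ⟩ := AlgEquiv.exists_apply_eq_neg_of_sq_mem_range
    (fun ⟨q, hq⟩ ↦ hs_irr ⟨q, congrArg Subtype.val hq⟩) ⟨d, hS.symm⟩
  have hσT := σ.apply_apply_eq_neg_of_apply_eq_neg habc hS hT
    (fun h ↦ ht0 (congrArg Subtype.val h)) hσ
  have : CharZero L := charZero_of_injective_algebraMap (algebraMap F L).injective
  have hord := orderOf_eq_four_of_apply_apply_gen_eq_neg
    (by simpa [neg_eq_iff_add_eq_zero] using ht0) σ hσT
  have hcard : Nat.card (F⟮t⟯ ≃ₐ[F] F⟮t⟯) = orderOf σ :=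
    le_antisymm (by rw [IsGalois.card_aut_eq_finrank, hord]; exact finrank_adjoin_le_four hroot)
      orderOf_le_card
  refine ⟨inferInstance, ?_, isCyclic_of_orderOf_eq_card σ hcard.symm⟩
  rw [← IsGalois.card_aut_eq_finrank, hcard, hord]

end Adjoin

theorem adjoin_sqrt_add_sqrt_cyclic_degree_four_general (p : ℕ) (hp : p.Prime) (a b c : ℚ)
    (ha : 0 < a) (hb : 0 < b)
    (habc : a ^ 2 = (p : ℚ) * (b ^ 2 + c ^ 2)) :
    letI E : IntermediateField ℚ ℝ :=
      IntermediateField.adjoin ℚ {Real.sqrt ((a : ℝ) + (b : ℝ) * Real.sqrt (p : ℝ))}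
    IsGalois ℚ E ∧ Module.finrank ℚ E = 4 ∧ IsCyclic (E ≃ₐ[ℚ] E) := by
  have hpos : 0 < (a : ℝ) + b * √p := by positivity
  refine isGalois_and_finrank_eq_four_and_isCyclic_adjoin habc hb.ne' (s := √p) ?_
    hp.irrational_sqrt ?_ (Real.sqrt_pos.mpr hpos).ne'
  · simp
  · simpa using Real.sq_sqrt hpos.le

/-- If `p` is prime and `a, b, c` are positive rationals with
`a² = p (b² + c²)`, then `ℚ(√(a + b √p))` is a Galois extension of `ℚ` of
degree `4` with cyclic Galois group. -/
theorem adjoin_sqrt_add_sqrt_cyclic_degree_four (p : ℕ) (hp : p.Prime) (a b c : ℚ)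
    (ha : 0 < a) (hb : 0 < b) (hc : 0 < c)
    (habc : a ^ 2 = (p : ℚ) * (b ^ 2 + c ^ 2)) :
    letI E : IntermediateField ℚ ℝ :=
      IntermediateField.adjoin ℚ {Real.sqrt ((a : ℝ) + (b : ℝ) * Real.sqrt (p : ℝ))}
    IsGalois ℚ E ∧ Module.finrank ℚ E = 4 ∧ IsCyclic (E ≃ₐ[ℚ] E) :=
  adjoin_sqrt_add_sqrt_cyclic_degree_four_general p hp a b c ha hb habc
end

section
/- The real number cot(π/16) equals 1 + √2 + √(4 + 2√2), and the field ℚ(cot(π/16)) equals the field ℚ(√(4 + 2√2)). -/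
/-!
Halving `π / 8` with `cot (x / 2) = cot x + 1 / sin x` gives the value:
`cot (π / 8) = 1 + √2` and `1 / sin (π / 8) = 2 / √(2 - √2) = √(4 + 2√2)`. For the fields, put
`r = √2` and `s = √(4 + 2√2)`, so that `c = cot (π / 16) = 1 + r + s`. Then `r = (s² - 4) / 2`
lies in `ℚ(s)`, and `r = (c² - 2c - 1) / (2c)` lies in `ℚ(c)`.
-/

open Real IntermediateField

theorem Real.cot_half {x : ℝ} (hx : sin x ≠ 0) : cot (x / 2) = cot x + (sin x)⁻¹ := by
  have hsin : sin x = 2 * sin (x / 2) * cos (x / 2) := by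
    rw [← sin_two_mul, mul_div_cancel₀ x two_ne_zero]
  have hcos : cos x = 2 * cos (x / 2) ^ 2 - 1 := by
    rw [← cos_two_mul, mul_div_cancel₀ x two_ne_zero]
  have hs : sin (x / 2) ≠ 0 := fun h => hx (by simp [hsin, h])
  have hc : cos (x / 2) ≠ 0 := fun h => hx (by simp [hsin, h])
  rw [cot_eq_cos_div_sin, cot_eq_cos_div_sin, hsin, hcos]
  field_simp
  ring

theorem Real.cot_pi_div_eight : cot (π / 8) = 1 + √2 := by
  have h2 : √2 ^ 2 = 2 := sq_sqrt zero_le_two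
  have hlt : √2 < 2 := by rw [sqrt_lt' two_pos]; norm_num
  have hsqrt : √(2 + √2) = (1 + √2) * √(2 - √2) := by
    rw [← sqrt_sq (by positivity : 0 ≤ 1 + √2), ← sqrt_mul (by positivity)]
    congr 1
    linear_combination √2 * h2
  have : √(2 - √2) ≠ 0 := (sqrt_pos.2 (by linarith)).ne'
  rw [cot_eq_cos_div_sin, cos_pi_div_eight, sin_pi_div_eight, hsqrt]
  field_simp

theorem Real.inv_sin_pi_div_eight : (sin (π / 8))⁻¹ = √(4 + 2 * √2) := by
  have h2 : √2 ^ 2 = 2 := sq_sqrt zero_le_two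
  have hlt : √2 < 2 := by rw [sqrt_lt' two_pos]; norm_num
  have hprod : √(4 + 2 * √2) * √(2 - √2) = 2 := by
    rw [← sqrt_mul (by positivity),
      show (4 + 2 * √2) * (2 - √2) = 2 ^ 2 by linear_combination -2 * h2, sqrt_sq zero_le_two]
  have : √(2 - √2) ≠ 0 := (sqrt_pos.2 (by linarith)).ne'
  rw [sin_pi_div_eight, inv_div, div_eq_iff this, hprod]

theorem IntermediateField.adjoin_one_add_add_eq_adjoin {F E : Type*} [Field F] [Field E]
    [Algebra F E] {r s : E} (h2 : (2 : E) ≠ 0) (hr : r ^ 2 = 2) (hs : s ^ 2 = 4 + 2 * r) :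
    F⟮1 + r + s⟯ = F⟮s⟯ := by
  generalize hc_def : 1 + r + s = c
  -- `c = 0` would give `s ^ 2 = (1 + r) ^ 2 = 3 + 2 * r`
  have hc : c ≠ 0 := fun h => one_ne_zero (α := E) <| by
    linear_combination -hs + (s - 1 - r) * (hc_def.trans h) + hr
  have hs_mem : s ∈ F⟮s⟯ := mem_adjoin_simple_self F s
  have hc_mem : c ∈ F⟮c⟯ := mem_adjoin_simple_self F c
  have hr_mem_s : r ∈ F⟮s⟯ := by
    rw [show r = (s ^ 2 - 4) / 2 by rw [eq_div_iff h2]; linear_combination -hs]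
    exact div_mem (sub_mem (pow_mem hs_mem 2) (ofNat_mem _ 4)) (ofNat_mem _ 2)
  have hr_mem_c : r ∈ F⟮c⟯ := by
    rw [show r = (c ^ 2 - 2 * c - 1) / (2 * c) by
      rw [eq_div_iff (mul_ne_zero h2 hc), ← hc_def]; linear_combination hr - hs]
    have h2c : 2 * c ∈ F⟮c⟯ := mul_mem (ofNat_mem _ 2) hc_mem
    exact div_mem (sub_mem (sub_mem (pow_mem hc_mem 2) h2c) (one_mem _)) h2c
  apply le_antisymm
  · rw [adjoin_simple_le_iff, ← hc_def]
    exact add_mem (add_mem (one_mem _) hr_mem_s) hs_mem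
  · rw [adjoin_simple_le_iff, show s = c - 1 - r by rw [← hc_def]; ring]
    exact sub_mem (sub_mem hc_mem (one_mem _)) hr_mem_c

/-- `cot (π / 16) = 1 + √2 + √(4 + 2√2)`, and
`ℚ(cot (π / 16)) = ℚ(√(4 + 2√2))`. -/
theorem cot_pi_div_sixteen :
    Real.cot (Real.pi / 16) = 1 + Real.sqrt 2 + Real.sqrt (4 + 2 * Real.sqrt 2) ∧
      IntermediateField.adjoin ℚ {Real.cot (Real.pi / 16)} =
        IntermediateField.adjoin ℚ {Real.sqrt (4 + 2 * Real.sqrt 2)} := by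
  have hsin : sin (π / 8) ≠ 0 :=
    (sin_pos_of_pos_of_lt_pi (by positivity) (by linarith [pi_pos])).ne'
  have hcot : cot (π / 16) = 1 + √2 + √(4 + 2 * √2) := by
    rw [show π / 16 = π / 8 / 2 by ring, cot_half hsin, cot_pi_div_eight, inv_sin_pi_div_eight]
  refine ⟨hcot, ?_⟩
  rw [hcot]
  exact adjoin_one_add_add_eq_adjoin two_ne_zero (sq_sqrt zero_le_two)
    (sq_sqrt (by positivity))
end

section
/- The field ℚ(cos(2π/9)) is a Galois extension of ℚ of degree 3 whose Galois group is cyclic (of order 3). -/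
/-!
`cos (2π/9)` is a root of `X³ - (3/4)X + 1/8`, which comes from `cos 3θ = 4cos³θ - 3cos θ` and
`cos (2π/3) = -1/2`; its other roots are `cos (4π/9)` and `cos (8π/9)`. The cubic has no rational
root, so it is the minimal polynomial and the degree is `3`. Since `cos 2θ = 2cos²θ - 1`, all three
roots lie in `ℚ(cos (2π/9))`, which is therefore a splitting field, hence Galois, and its Galois
group has prime order `3`.
-/

open Polynomial IntermediateField Real

theorem Polynomial.roots_eq_val_of_natDegree_le_card {K : Type*} [Field K] {p : K[X]}
    (hp : p ≠ 0) {s : Finset K} (hs : ∀ x ∈ s, p.IsRoot x) (hcard : p.natDegree ≤ s.card) :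
    p.roots = s.val := by
  have hle : s.val ≤ p.roots :=
    Finset.val_le_iff_val_subset.mpr fun x hx ↦ (mem_roots hp).mpr (hs x hx)
  exact (Multiset.eq_of_le_of_card_le hle ((card_roots' p).trans hcard)).symm

theorem IntermediateField.isGalois_adjoin_simple_of_rootSet_subset {K L : Type*} [Field K]
    [Field L] [Algebra K L] [PerfectField K] {α : L} (hα : IsIntegral K α)
    (hsplits : ((minpoly K α).map (algebraMap K L)).Splits)
    (hroots : (minpoly K α).rootSet L ⊆ K⟮α⟯) : IsGalois K K⟮α⟯ := by
  have hadjoin : K⟮α⟯ = adjoin K ((minpoly K α).rootSet L) :=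
    le_antisymm
      (adjoin_simple_le_iff.mpr <| subset_adjoin K _ <|
        mem_rootSet.mpr ⟨minpoly.ne_zero hα, minpoly.aeval K α⟩)
      (adjoin_le_iff.mpr hroots)
  have : (minpoly K α).IsSplittingField K K⟮α⟯ :=
    hadjoin ▸ adjoin_rootSet_isSplittingField hsplits
  exact IsGalois.of_separable_splitting_field
    (PerfectField.separable_of_irreducible (minpoly.irreducible hα))

theorem Real.cos_two_mul_mem {S : Type*} [SetLike S ℝ] [SubringClass S ℝ] {s : S}
    {θ : ℝ} (h : cos θ ∈ s) : cos (2 * θ) ∈ s := by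
  rw [cos_two_mul]
  exact sub_mem (mul_mem (ofNat_mem s 2) (pow_mem h 2)) (one_mem s)

theorem Rat.cube_sub_three_mul_add_one_ne_zero (r : ℚ) : r ^ 3 - 3 * r + 1 ≠ 0 := by
  intro hr
  have hint : IsIntegral ℤ r := by
    refine ⟨X ^ 3 - C 3 * X + C 1, by monicity!, ?_⟩
    simpa [eval₂_add, eval₂_sub, eval₂_mul, eval₂_pow] using hr
  obtain ⟨n, rfl⟩ := IsIntegrallyClosed.isIntegral_iff.mp hint
  have hn : n ^ 3 - 3 * n + 1 = 0 := by
    rw [algebraMap_int_eq, eq_intCast] at hr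
    exact_mod_cast hr
  have hunit : IsUnit n := isUnit_of_dvd_one ⟨3 - n ^ 2, by linear_combination hn⟩
  rcases Int.isUnit_iff.mp hunit with rfl | rfl <;> norm_num at hn

namespace CosTwoPiDivNine

noncomputable def cubic : ℚ[X] := X ^ 3 - C (3 / 4) * X + C (1 / 8)

theorem cubic_monic : cubic.Monic := by unfold cubic; monicity!

theorem cubic_natDegree : cubic.natDegree = 3 := by unfold cubic; compute_degree!

theorem aeval_cos_cubic_of_cos_three_mul {θ : ℝ} (h : cos (3 * θ) = -(1 / 2)) :
    aeval (cos θ) cubic = 0 := by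
  rw [cos_three_mul] at h
  simp only [cubic, map_add, map_sub, map_mul, map_pow, aeval_X, aeval_C, eq_ratCast]
  push_cast
  linear_combination h / 4

theorem cubic_irreducible : Irreducible cubic := by
  rw [irreducible_iff_roots_eq_zero_of_degree_le_three (by rw [cubic_natDegree]; norm_num)
    cubic_natDegree.le, Multiset.eq_zero_iff_forall_notMem]
  intro q hq
  rw [mem_roots cubic_monic.ne_zero, IsRoot, cubic] at hq
  simp only [eval_add, eval_sub, eval_mul, eval_pow, eval_X, eval_C] at hq
  exact Rat.cube_sub_three_mul_add_one_ne_zero (2 * q) (by linear_combination 8 * hq)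

theorem aeval_cos_two_pi_div_nine : aeval (cos (2 * π / 9)) cubic = 0 :=
  aeval_cos_cubic_of_cos_three_mul <| by
    rw [show 3 * (2 * π / 9) = π - π / 3 by ring, cos_pi_sub, cos_pi_div_three]

theorem aeval_cos_four_pi_div_nine : aeval (cos (4 * π / 9)) cubic = 0 :=
  aeval_cos_cubic_of_cos_three_mul <| by
    rw [show 3 * (4 * π / 9) = π / 3 + π by ring, cos_add_pi, cos_pi_div_three]

theorem aeval_cos_eight_pi_div_nine : aeval (cos (8 * π / 9)) cubic = 0 :=
  aeval_cos_cubic_of_cos_three_mul <| by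
    rw [show 3 * (8 * π / 9) = π - π / 3 + 2 * π by ring, cos_add_two_pi, cos_pi_sub,
      cos_pi_div_three]

theorem minpoly_cos_two_pi_div_nine : minpoly ℚ (cos (2 * π / 9)) = cubic :=
  (minpoly.eq_of_irreducible_of_monic cubic_irreducible aeval_cos_two_pi_div_nine
    cubic_monic).symm

noncomputable def cosRoots : Finset ℝ := {cos (2 * π / 9), cos (4 * π / 9), cos (8 * π / 9)}

theorem card_cosRoots : cosRoots.card = 3 := by
  have hπ := pi_pos
  have h₁₂ : cos (4 * π / 9) < cos (2 * π / 9) :=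
    cos_lt_cos_of_nonneg_of_le_pi (by positivity) (by linarith) (by linarith)
  have h₂₃ : cos (8 * π / 9) < cos (4 * π / 9) :=
    cos_lt_cos_of_nonneg_of_le_pi (by positivity) (by linarith) (by linarith)
  exact Finset.card_eq_three.mpr ⟨_, _, _, h₁₂.ne', (h₂₃.trans h₁₂).ne', h₂₃.ne', rfl⟩

theorem cubic_aroots_real : cubic.aroots ℝ = cosRoots.val := by
  refine roots_eq_val_of_natDegree_le_card (map_ne_zero cubic_monic.ne_zero) ?_ ?_
  · simp only [cosRoots, Finset.mem_insert, Finset.mem_singleton, IsRoot, eval_map_algebraMap]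
    rintro x (rfl | rfl | rfl)
    exacts [aeval_cos_two_pi_div_nine, aeval_cos_four_pi_div_nine, aeval_cos_eight_pi_div_nine]
  · rw [natDegree_map, cubic_natDegree, card_cosRoots]

theorem cubic_splits_real : (cubic.map (algebraMap ℚ ℝ)).Splits := by
  rw [splits_iff_card_roots, ← aroots_def, cubic_aroots_real, Finset.card_val, card_cosRoots,
    natDegree_map, cubic_natDegree]

theorem cubic_rootSet_real : cubic.rootSet ℝ = cosRoots := by
  classical
  rw [rootSet_def, cubic_aroots_real, Finset.val_toFinset]

theorem cosRoots_subset_adjoin : (cosRoots : Set ℝ) ⊆ ℚ⟮cos (2 * π / 9)⟯ := by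
  have h₁ : cos (2 * π / 9) ∈ ℚ⟮cos (2 * π / 9)⟯ := mem_adjoin_simple_self ℚ _
  have h₂ : cos (4 * π / 9) ∈ ℚ⟮cos (2 * π / 9)⟯ := by
    convert Real.cos_two_mul_mem h₁ using 2; ring
  have h₃ : cos (8 * π / 9) ∈ ℚ⟮cos (2 * π / 9)⟯ := by
    convert Real.cos_two_mul_mem h₂ using 2; ring
  simp [cosRoots, Set.insert_subset_iff, h₁, h₂, h₃]

end CosTwoPiDivNine

open CosTwoPiDivNine in
/-- `ℚ(cos (2π / 9))` is a Galois extension of `ℚ` of degree `3` with cyclic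
Galois group. -/
theorem adjoin_cos_two_pi_div_nine_cyclic_degree_three :
    letI E : IntermediateField ℚ ℝ :=
      IntermediateField.adjoin ℚ {Real.cos (2 * Real.pi / 9)}
    IsGalois ℚ E ∧ Module.finrank ℚ E = 3 ∧ IsCyclic (E ≃ₐ[ℚ] E) := by
  have hint : IsIntegral ℚ (cos (2 * π / 9)) := ⟨cubic, cubic_monic, aeval_cos_two_pi_div_nine⟩
  have := adjoin.finiteDimensional hint
  have hrank : Module.finrank ℚ ℚ⟮cos (2 * π / 9)⟯ = 3 := by
    rw [adjoin.finrank hint, minpoly_cos_two_pi_div_nine, cubic_natDegree]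
  have hgal : IsGalois ℚ ℚ⟮cos (2 * π / 9)⟯ := by
    refine isGalois_adjoin_simple_of_rootSet_subset hint ?_ ?_ <;>
      rw [minpoly_cos_two_pi_div_nine]
    exacts [cubic_splits_real, cubic_rootSet_real ▸ cosRoots_subset_adjoin]
  exact ⟨hgal, hrank, isCyclic_of_prime_card (by rw [IsGalois.card_aut_eq_finrank, hrank])⟩
end

section
/- Let n = 5 or n ≥ 7 with n ∉ {8, 12, 24}. Then there do not exist nonnegative rational numbers r₁, …, rₙ and signs ε₂, …, εₙ ∈ {−1, +1} such that (n/4)·cot(π/n) = √r₁ + ε₂√r₂ + ⋯ + εₙ√rₙ. -/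
/-!
Let `ζ = exp (2πi / 4n)`. If `j ≡ 1 (mod 4)` then `(ζ ^ j) ^ n = i`, so `cot (jπ/n)` is one and
the same rational function of `ζ ^ j` with rational coefficients. A sum of square roots of
rationals lies in a field `ℚ(S)` with `s² ∈ ℚ` for `s ∈ S`, and every embedding of `ℚ(ζ, S)` into
`ℂ` only changes the signs of the elements of `S`; in particular it maps `ℚ(ζ, S)` to itself.
Taking `k` odd and prime to `n` with `k² ≢ 1 (mod n)`, which exists because `n ∤ 24`, and an
embedding `σ` with `σ ζ = ζ ^ k`, the square `σ ∘ σ` fixes `ℚ(S)` and sends `ζ` to `ζ ^ k²`.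
Hence `cot (k²π/n) = cot (π/n)`, i.e. `k² ≡ 1 (mod n)`, a contradiction.
-/

open Real IntermediateField Polynomial

theorem Nat.exists_odd_coprime_sq_not_modEq_one {n : ℕ} (hn : n ≠ 0) (h24 : ¬ n ∣ 24) :
    ∃ k, Odd k ∧ k.Coprime n ∧ ¬ k ^ 2 ≡ 1 [MOD n] := by
  obtain ⟨a, m, hm, rfl⟩ := Nat.exists_eq_two_pow_mul_odd hn
  by_cases hm3 : m ∣ 3
  · refine ⟨5, by decide, Nat.Coprime.mul_right (Nat.Coprime.pow_right a (by decide))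
      (Nat.Coprime.coprime_dvd_right hm3 (by decide)), fun h => h24 ?_⟩
    exact (Nat.modEq_iff_dvd' (by norm_num)).mp h.symm
  · refine ⟨m + 2, hm.add_even even_two, Nat.Coprime.mul_right (Nat.Coprime.pow_right a ?_) ?_,
      fun h => hm3 ?_⟩
    · simpa using hm.add_even even_two
    · rw [add_comm, Nat.coprime_add_self_left]
      exact Nat.coprime_two_left.mpr hm
    · have h4 : (m + 2) ^ 2 ≡ 4 [MOD m] := by
        rw [show (m + 2) ^ 2 = 4 + (m + 4) * m by ring]
        exact Nat.add_mul_modulus_modEq_iff.mpr rfl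
      exact (Nat.modEq_iff_dvd' (by norm_num)).mp (h4.symm.trans (h.of_mul_left _)).symm

theorem cot_pi_div_pos {n : ℕ} (hn : 3 ≤ n) : 0 < cot (π / n) := by
  have hn' : (3 : ℝ) ≤ n := by exact_mod_cast hn
  have h0 : 0 < π / n := by positivity
  have h2 : π / n < π / 2 := div_lt_div_of_pos_left pi_pos (by norm_num) (by linarith)
  rw [cot_eq_cos_div_sin]
  exact div_pos (cos_pos_of_mem_Ioo ⟨by linarith, h2⟩) (sin_pos_of_pos_of_lt_pi h0 (by linarith))

theorem modEq_one_of_cot_mul_pi_div_eq {n a : ℕ} (hn : 3 ≤ n)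
    (h : cot (a * π / n) = cot (π / n)) : a ≡ 1 [MOD n] := by
  have hpos := cot_pi_div_pos hn
  have hsa : sin (a * π / n) ≠ 0 := fun h0 => by
    rw [cot_eq_cos_div_sin, h0, div_zero] at h
    linarith
  have hs1 : sin (π / n) ≠ 0 := fun h0 => by
    rw [cot_eq_cos_div_sin, h0, div_zero] at hpos
    linarith
  rw [cot_eq_cos_div_sin, cot_eq_cos_div_sin, div_eq_div_iff hsa hs1] at h
  obtain ⟨j, hj⟩ := sin_eq_zero_iff.mp (show sin (a * π / n - π / n) = 0 by rw [sin_sub]; linarith)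
  have hn0 : (n : ℝ) ≠ 0 := by positivity
  have hj' : ((a : ℤ) : ℝ) - 1 = n * j := by
    field_simp at hj
    push_cast
    linarith
  exact (Nat.modEq_iff_dvd.mpr ⟨j, by exact_mod_cast hj'⟩).symm

def cotRatio {K : Type*} [Field K] (n : ℕ) (w : K) : K := (w ^ 4 + 1) / (w ^ n * (1 - w ^ 4))

theorem map_cotRatio {K L G : Type*} [Field K] [Field L] [FunLike G K L] [RingHomClass G K L]
    (f : G) (n : ℕ) (w : K) : f (cotRatio n w) = cotRatio n (f w) := by
  simp only [cotRatio, map_div₀, map_mul, map_add, map_sub, map_pow, map_one]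

theorem ofReal_cot_nat_mul_pi_div {n j : ℕ} (hn : n ≠ 0) (hj : j % 4 = 1) :
    (cot (j * π / n) : ℂ) = cotRatio n (Complex.exp (2 * π * Complex.I / (4 * n : ℕ)) ^ j) := by
  have h4 : (Complex.exp (2 * π * Complex.I / (4 * n : ℕ)) ^ j) ^ 4 =
      Complex.exp (2 * Complex.I * (j * π / n : ℝ)) := by
    rw [← pow_mul, ← Complex.exp_nat_mul]
    congr 1
    push_cast
    field_simp
  have hI : (Complex.exp (2 * π * Complex.I / (4 * n : ℕ)) ^ j) ^ n = Complex.I := by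
    rw [← pow_mul, mul_comm j n, pow_mul, ← Complex.exp_nat_mul,
      show (n : ℂ) * (2 * π * Complex.I / (4 * n : ℕ)) = π / 2 * Complex.I by
        push_cast; field_simp; ring,
      Complex.exp_pi_div_two_mul_I, pow_eq_pow_mod j Complex.I_pow_four, hj, pow_one]
  rw [Complex.ofReal_cot, Complex.cot_eq_exp_ratio, cotRatio, h4, hI]

section AlgHomAdjoin

variable {F E : Type*} [Field F] [Field E] [Algebra F E]

theorem IntermediateField.algHom_apply_mem_adjoin {S : Set E} (σ : adjoin F S →ₐ[F] E)
    (hS : ∀ s (hs : s ∈ S), σ ⟨s, subset_adjoin F S hs⟩ ∈ adjoin F S) (x : adjoin F S) :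
    σ x ∈ adjoin F S := by
  obtain ⟨x, hx⟩ := x
  induction hx using adjoin_induction with
  | mem x hx => exact hS x hx
  | algebraMap x => exact (σ.commutes x).symm ▸ algebraMap_mem _ x
  | add x y hx hy ihx ihy => exact (map_add σ ⟨x, hx⟩ ⟨y, hy⟩) ▸ add_mem ihx ihy
  | inv x hx ih => exact (map_inv₀ σ ⟨x, hx⟩) ▸ inv_mem ih
  | mul x y hx hy ihx ihy => exact (map_mul σ ⟨x, hx⟩ ⟨y, hy⟩) ▸ mul_mem ihx ihy

theorem exists_algHom_adjoin_insert_pow_sq [IsAlgClosed E] {ζ : E} (hζ : IsIntegral F ζ) {k : ℕ}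
    (hk : aeval (ζ ^ k) (minpoly F ζ) = 0) {S : Set E}
    (hS : ∀ s ∈ S, s ^ 2 ∈ Set.range (algebraMap F E)) :
    ∃ ψ : adjoin F (insert ζ S) →ₐ[F] E,
      ψ ⟨ζ, subset_adjoin F _ (Set.mem_insert ζ S)⟩ = ζ ^ k ^ 2 ∧
      ∀ x (hx : x ∈ adjoin F S), ψ ⟨x, adjoin.mono F _ _ (Set.subset_insert ζ S) hx⟩ = x := by
  set K := adjoin F (insert ζ S)
  have hζK : ζ ∈ K := subset_adjoin F _ (Set.mem_insert ζ S)
  have hSK : ∀ s ∈ S, s ∈ K := fun s hs => subset_adjoin F _ (Set.mem_insert_of_mem ζ hs)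
  have hsplit : ∀ s ∈ insert ζ S,
      IsIntegral F s ∧ ((minpoly F s).map (algebraMap F E)).Splits := by
    rintro s (rfl | hs)
    · exact ⟨hζ, IsAlgClosed.splits _⟩
    · obtain ⟨c, hc⟩ := hS s hs
      exact ⟨⟨X ^ 2 - C c, monic_X_pow_sub_C c two_ne_zero, by simp [hc]⟩, IsAlgClosed.splits _⟩
  obtain ⟨σ, hσζ⟩ := exists_algHom_adjoin_of_splits_of_aeval hsplit hζK hk
  have hσS : ∀ s (hs : s ∈ S), σ ⟨s, hSK s hs⟩ = s ∨ σ ⟨s, hSK s hs⟩ = -s := by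
    intro s hs
    obtain ⟨c, hc⟩ := hS s hs
    have hsq : (⟨s, hSK s hs⟩ : K) ^ 2 = algebraMap F K c := Subtype.ext hc.symm
    rw [← sq_eq_sq_iff_eq_or_eq_neg, ← map_pow, hsq, σ.commutes, hc]
  have hσK : ∀ x, σ x ∈ K := algHom_apply_mem_adjoin σ <| by
    rintro s (rfl | hs)
    · exact hσζ ▸ pow_mem hζK k
    · rcases hσS s hs with h | h <;> rw [h]
      · exact hSK s hs
      · exact neg_mem (hSK s hs)
  set ψ := σ.comp (σ.codRestrict K.toSubalgebra hσK)
  have hψS : ∀ s (hs : s ∈ S), ψ ⟨s, hSK s hs⟩ = s := by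
    intro s hs
    show σ ⟨σ ⟨s, hSK s hs⟩, _⟩ = _
    rcases hσS s hs with h | h
    · rw [show (⟨σ ⟨s, hSK s hs⟩, hσK _⟩ : K) = ⟨s, hSK s hs⟩ from Subtype.ext h, h]
    · rw [show (⟨σ ⟨s, hSK s hs⟩, hσK _⟩ : K) = -⟨s, hSK s hs⟩ from Subtype.ext h, map_neg, h,
        neg_neg]
  have hfix : ψ.comp (inclusion (adjoin.mono F _ _ (Set.subset_insert ζ S))) = (adjoin F S).val :=
    adjoin_algHom_ext F hψS
  refine ⟨ψ, ?_, fun x hx => DFunLike.congr_fun hfix ⟨x, hx⟩⟩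
  show σ ⟨σ ⟨ζ, hζK⟩, _⟩ = _
  rw [show (⟨σ ⟨ζ, hζK⟩, hσK _⟩ : K) = ⟨ζ, hζK⟩ ^ k from Subtype.ext hσζ, map_pow, hσζ,
    ← pow_mul, sq]

end AlgHomAdjoin

theorem sq_modEq_one_of_cot_pi_div_mem_adjoin {n k : ℕ} {S : Set ℂ} (hn : 3 ≤ n) (hk : Odd k)
    (hkn : k.Coprime n) (hS : ∀ s ∈ S, s ^ 2 ∈ Set.range (algebraMap ℚ ℂ))
    (hcot : (cot (π / n) : ℂ) ∈ adjoin ℚ S) : k ^ 2 ≡ 1 [MOD n] := by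
  set ζ := Complex.exp (2 * π * Complex.I / (4 * n : ℕ))
  have hζ : IsPrimitiveRoot ζ (4 * n) := Complex.isPrimitiveRoot_exp _ (by omega)
  have hk4n : k.Coprime (4 * n) :=
    Nat.Coprime.mul_right (Nat.Coprime.pow_right 2 (Nat.coprime_two_right.mpr hk)) hkn
  have hroot : aeval (ζ ^ k) (minpoly ℚ ζ) = 0 := by
    rw [← cyclotomic_eq_minpoly_rat hζ (by omega), aeval_def, eval₂_eq_eval_map, map_cyclotomic]
    exact (hζ.pow_of_coprime k hk4n).isRoot_cyclotomic (by omega)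
  obtain ⟨ψ, hψζ, hψS⟩ :=
    exists_algHom_adjoin_insert_pow_sq (hζ.isIntegral (by omega)).tower_top hroot hS
  have hk2 : k ^ 2 % 4 = 1 := by
    obtain ⟨t, rfl⟩ := hk
    ring_nf
    omega
  refine modEq_one_of_cot_mul_pi_div_eq hn (Complex.ofReal_injective ?_)
  calc (cot ((k ^ 2 : ℕ) * π / n) : ℂ)
      = cotRatio n (ψ ⟨ζ, _⟩) := by rw [hψζ, ofReal_cot_nat_mul_pi_div (by omega) hk2]
    _ = ψ ⟨cot (π / n), _⟩ := by
      rw [← map_cotRatio]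
      congr 1
      apply Subtype.ext
      rw [← coe_val, map_cotRatio]
      have h1 := ofReal_cot_nat_mul_pi_div (n := n) (j := 1) (by omega) rfl
      rw [pow_one, Nat.cast_one, one_mul] at h1
      exact h1.symm
    _ = cot (π / n) := hψS _ hcot

/-- For `n = 5` or `n ≥ 7` with `n ∉ {8, 12, 24}`, the identity
`(n/4) cot (π/n) = √r₁ ± √r₂ ± ⋯ ± √rₙ` is impossible with the `rᵢ`
nonnegative rationals. -/
theorem no_sqrt_sum_identity_for_cot (n : ℕ) (hn : n = 5 ∨ 7 ≤ n)
    (h8 : n ≠ 8) (h12 : n ≠ 12) (h24 : n ≠ 24) :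
    ¬ ∃ (r : Fin n → ℚ) (ε : Fin n → ℝ), (∀ i, 0 ≤ r i) ∧
      (∀ i, ε i = 1 ∨ ε i = -1) ∧ ε ⟨0, by omega⟩ = 1 ∧
      (n : ℝ) / 4 * Real.cot (Real.pi / (n : ℝ)) = ∑ i, ε i * Real.sqrt ((r i : ℝ)) := by
  rintro ⟨r, ε, hr, hε, -, hsum⟩
  have hn24 : ¬ n ∣ 24 := fun h => by
    have := Nat.le_of_dvd (by norm_num) h
    interval_cases n <;> omega
  obtain ⟨k, hk, hkn, hk1⟩ := Nat.exists_odd_coprime_sq_not_modEq_one (by omega) hn24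
  set v : Fin n → ℂ := fun i => (ε i * √(r i) : ℝ)
  have hv : ∀ s ∈ Set.range v, s ^ 2 ∈ Set.range (algebraMap ℚ ℂ) := by
    rintro _ ⟨i, rfl⟩
    have hε2 : ε i ^ 2 = 1 := by rcases hε i with h | h <;> simp [h]
    exact ⟨r i, by
      simp [v, ← Complex.ofReal_pow, mul_pow, hε2, Real.sq_sqrt (Rat.cast_nonneg.mpr (hr i))]⟩
  have hcot : (cot (π / n) : ℂ) = ((4 / n : ℚ) : ℂ) * ∑ i, v i := by
    have hn0 : (n : ℝ) ≠ 0 := by norm_cast; omega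
    have hcotR : cot (π / n) = ((4 / n : ℚ) : ℝ) * ∑ i, ε i * √(r i) := by
      rw [← hsum]
      push_cast
      field_simp
    simp only [v, hcotR]
    push_cast
    rfl
  refine hk1 (sq_modEq_one_of_cot_pi_div_mem_adjoin (by omega) hk hkn hv ?_)
  rw [hcot]
  exact mul_mem (SubfieldClass.ratCast_mem _ _) (sum_mem fun i _ => subset_adjoin ℚ _ ⟨i, rfl⟩)
end
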